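/- arXiv:2406.19696 — 6 statements merged into one kernel-verified Lean document; each statement's English description precedes it below -/
import Mathlib

section
/- For every L > 0 and every φ_0 ∈ ℝ, there exists exactly one twice continuously differentiable function φ : [−L/2, L/2] → ℝ satisfying φ″(x) + f(φ(x)) = 0 on [−L/2, L/2] together with the equal Dirichlet boundary conditions φ(−L/2) = φ(L/2) = φ_0. -/
/-!
Uniqueness is a maximum principle: if `φ₁ - φ₂` had a positive interior maximum, then since `f`
is strictly decreasing, `(φ₁ - φ₂)'' = f φ₂ - f φ₁ > 0` there, which is impossible.

Existence is a contraction argument. The parabola barrier `φ₀ + (|f φ₀| + 1) (x - a) (b - x) / 2`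
and its mirror image confine every solution to a fixed interval around `φ₀`, so `f` may be
truncated outside it and taken `K`-Lipschitz. For `s² ≥ K` the equation reads
`φ'' - s² φ = -f φ - s² φ`, whose right-hand side is `s²`-Lipschitz in `φ` because `f` is
decreasing. The Dirichlet solution operator of `d²/dx² - s²` (an explicit `sinh` kernel) has
sup-norm at most `(1 - 1 / cosh (s (b - a) / 2)) / s²`, as a `cosh` barrier shows, so solving
for the left-hand side is a contraction on `C([a, b])`.
-/

open Real Filter Set Topology

/-- A (C²) solution of the PB equation `φ'' + f(φ) = 0` on `[a, b]`, written as the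
first-order planar system `φ' = u`, `u' = -f(φ)` (so `φ` is twice continuously
differentiable on `[a, b]` with second derivative `-f ∘ φ`). -/
def IsPBSol (f : ℝ → ℝ) (a b : ℝ) (φ u : ℝ → ℝ) : Prop :=
  ∀ x ∈ Set.Icc a b,
    HasDerivWithinAt φ (u x) (Set.Icc a b) x ∧
    HasDerivWithinAt u (-(f (φ x))) (Set.Icc a b) x

theorem IsLocalMax.nonpos_of_hasDerivAt_deriv {v v' : ℝ → ℝ} {x₀ v'' : ℝ}
    (hmax : IsLocalMax v x₀) (hv : ∀ᶠ x in 𝓝 x₀, HasDerivAt v (v' x) x)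
    (hv' : HasDerivAt v' v'' x₀) : v'' ≤ 0 := by
  by_contra! hpos
  have hsign : ∀ᶠ x in 𝓝 x₀, SignType.sign (v' x) = SignType.sign (x - x₀) :=
    eventually_nhdsWithin_sign_eq_of_deriv_pos (by rwa [hv'.deriv])
      (hmax.hasDerivAt_eq_zero hv.self_of_nhds)
  obtain ⟨ε, hε, hball⟩ := Metric.eventually_nhds_iff_ball.1 (hv.and (hsign.and hmax))
  have hsub : Icc x₀ (x₀ + ε / 2) ⊆ Metric.ball x₀ ε := fun x hx => by
    rw [Metric.mem_ball, Real.dist_eq, abs_lt]; constructor <;> linarith [hx.1, hx.2]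
  obtain ⟨c, hc, hslope⟩ := exists_hasDerivAt_eq_slope v v' (by linarith : x₀ < x₀ + ε / 2)
    (fun x hx => (hball x (hsub hx)).1.continuousAt.continuousWithinAt)
    (fun x hx => (hball x (hsub (Ioo_subset_Icc_self hx))).1)
  have hc' : 0 < v' c := by
    have := (hball c (hsub (Ioo_subset_Icc_self hc))).2.1
    rwa [sign_pos (sub_pos.2 hc.1), sign_eq_one_iff] at this
  have hle := (hball _ (hsub (right_mem_Icc.2 (by linarith)))).2.2
  rw [hslope, div_pos_iff_of_pos_right (by linarith)] at hc'
  linarith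

theorem nonpos_of_deriv2_pos {a b : ℝ} {v v' v'' : ℝ → ℝ} (hv : ContinuousOn v (Icc a b))
    (hv' : ∀ x ∈ Ioo a b, HasDerivAt v (v' x) x) (hv'' : ∀ x ∈ Ioo a b, HasDerivAt v' (v'' x) x)
    (ha : v a ≤ 0) (hb : v b ≤ 0) (hpos : ∀ x ∈ Ioo a b, 0 < v x → 0 < v'' x) :
    ∀ x ∈ Icc a b, v x ≤ 0 := by
  intro x hx
  obtain ⟨x₀, hx₀, hmax⟩ := isCompact_Icc.exists_isMaxOn ⟨x, hx⟩ hv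
  refine (hmax hx).trans (not_lt.1 fun hvx₀ => ?_)
  have hx₀' : x₀ ∈ Ioo a b :=
    ⟨hx₀.1.lt_of_ne (by rintro rfl; linarith), hx₀.2.lt_of_ne (by rintro rfl; linarith)⟩
  have hnhds : Ioo a b ∈ 𝓝 x₀ := isOpen_Ioo.mem_nhds hx₀'
  exact (hpos x₀ hx₀' hvx₀).not_ge <| (hmax.isLocalMax (mem_of_superset hnhds
    Ioo_subset_Icc_self)).nonpos_of_hasDerivAt_deriv (eventually_of_mem hnhds hv')
    (hv'' x₀ hx₀')

namespace IsPBSol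

variable {f : ℝ → ℝ} {a b : ℝ} {φ u : ℝ → ℝ}

theorem continuousOn (h : IsPBSol f a b φ u) : ContinuousOn φ (Icc a b) :=
  fun x hx => (h x hx).1.continuousWithinAt

theorem hasDerivAt (h : IsPBSol f a b φ u) {x : ℝ} (hx : x ∈ Ioo a b) :
    HasDerivAt φ (u x) x := (h x (Ioo_subset_Icc_self hx)).1.hasDerivAt (Icc_mem_nhds hx.1 hx.2)

theorem hasDerivAt_deriv (h : IsPBSol f a b φ u) {x : ℝ} (hx : x ∈ Ioo a b) :
    HasDerivAt u (-f (φ x)) x :=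
  (h x (Ioo_subset_Icc_self hx)).2.hasDerivAt (Icc_mem_nhds hx.1 hx.2)

theorem neg (h : IsPBSol f a b φ u) : IsPBSol (fun y => -f (-y)) a b (-φ) (-u) := fun x hx =>
  ⟨(h x hx).1.neg, by simpa using (h x hx).2.neg⟩

theorem congr {g : ℝ → ℝ} (h : IsPBSol g a b φ u) (hfg : ∀ x ∈ Icc a b, g (φ x) = f (φ x)) :
    IsPBSol f a b φ u := fun x hx => hfg x hx ▸ h x hx

theorem le_of_le_boundary {φ₂ u₂ : ℝ → ℝ} (hf : StrictAnti f) (h : IsPBSol f a b φ u)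
    (h₂ : IsPBSol f a b φ₂ u₂) (ha : φ a ≤ φ₂ a) (hb : φ b ≤ φ₂ b) :
    ∀ x ∈ Icc a b, φ x ≤ φ₂ x := by
  have := nonpos_of_deriv2_pos (v := φ - φ₂) (v' := u - u₂)
    (v'' := fun x => f (φ₂ x) - f (φ x)) (h.continuousOn.sub h₂.continuousOn)
    (fun x hx => (h.hasDerivAt hx).sub (h₂.hasDerivAt hx))
    (fun x hx => by simpa [sub_eq_add_neg, add_comm] using
      (h.hasDerivAt_deriv hx).sub (h₂.hasDerivAt_deriv hx))
    (by simpa using ha) (by simpa using hb)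
    (fun x _ hx => by simpa using hf (sub_pos.1 hx))
  exact fun x hx => sub_nonpos.1 (this x hx)

theorem sub_le (hf : Antitone f) (h : IsPBSol f a b φ u) {φ₀ : ℝ} (ha : φ a = φ₀)
    (hb : φ b = φ₀) : ∀ x ∈ Icc a b, φ x - φ₀ ≤ (|f φ₀| + 1) / 2 * ((x - a) * (b - x)) := by
  set C := (|f φ₀| + 1) / 2
  have hC : |f φ₀| < 2 * C := by simp only [C]; linarith
  have hP : ∀ x, HasDerivAt (fun x => C * ((x - a) * (b - x))) (C * ((b - x) - (x - a))) x :=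
    fun x => ((((hasDerivAt_id' x).sub_const a).mul ((hasDerivAt_id' x).const_sub b)).const_mul
      C).congr_deriv (by ring)
  have hP' : ∀ x, HasDerivAt (fun x => C * ((b - x) - (x - a))) (-(2 * C)) x :=
    fun x => ((((hasDerivAt_id' x).const_sub b).sub ((hasDerivAt_id' x).sub_const a)).const_mul
      C).congr_deriv (by ring)
  have := nonpos_of_deriv2_pos (v := fun x => φ x - φ₀ - C * ((x - a) * (b - x)))
    (v' := fun x => u x - C * ((b - x) - (x - a))) (v'' := fun x => -f (φ x) + 2 * C)
    ((h.continuousOn.sub continuousOn_const).sub (by fun_prop))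
    (fun x hx => ((h.hasDerivAt hx).sub_const φ₀).fun_sub (hP x))
    (fun x hx => by simpa [sub_eq_add_neg] using (h.hasDerivAt_deriv hx).fun_sub (hP' x))
    (by simp [ha]) (by simp [hb])
    (fun x hx hpos => by
      have hCx : 0 ≤ C * ((x - a) * (b - x)) :=
        mul_nonneg (by positivity) (mul_nonneg (by linarith [hx.1]) (by linarith [hx.2]))
      have := hf (show φ₀ ≤ φ x by linarith)
      linarith [le_abs_self (f φ₀)])
  exact fun x hx => by linarith [this x hx]

theorem abs_sub_le (hf : Antitone f) (h : IsPBSol f a b φ u) {φ₀ : ℝ} (ha : φ a = φ₀)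
    (hb : φ b = φ₀) : ∀ x ∈ Icc a b, |φ x - φ₀| ≤ (|f φ₀| + 1) / 2 * ((x - a) * (b - x)) := by
  intro x hx
  have hneg := h.neg.sub_le (fun y y' hy => neg_le_neg (hf (neg_le_neg hy))) (φ₀ := -φ₀)
    (by simp [ha]) (by simp [hb]) x hx
  simp only [Pi.neg_apply, neg_neg, abs_neg] at hneg
  rw [abs_le]
  constructor <;> linarith [h.sub_le hf ha hb x hx]

end IsPBSol

/-- The solution of `w'' - s² w = h`, `w a = w b = 0`, given by the Green's function of
`d²/dx² - s²`. -/
noncomputable def greenSol (a b s : ℝ) (h : ℝ → ℝ) (x : ℝ) : ℝ :=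
  (sinh (s * (x - a)) * (∫ y in b..x, sinh (s * (b - y)) * h y)
    - sinh (s * (b - x)) * ∫ y in a..x, sinh (s * (y - a)) * h y) / (s * sinh (s * (b - a)))

noncomputable def greenSolDeriv (a b s : ℝ) (h : ℝ → ℝ) (x : ℝ) : ℝ :=
  (cosh (s * (x - a)) * (∫ y in b..x, sinh (s * (b - y)) * h y)
    + cosh (s * (b - x)) * ∫ y in a..x, sinh (s * (y - a)) * h y) / sinh (s * (b - a))

section greenSol

variable {a b s : ℝ} {h : ℝ → ℝ}

@[simp] theorem greenSol_left : greenSol a b s h a = 0 := by simp [greenSol]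

@[simp] theorem greenSol_right : greenSol a b s h b = 0 := by simp [greenSol]

theorem hasDerivAt_greenSol (hs : s ≠ 0) (hh : Continuous h) (x : ℝ) :
    HasDerivAt (greenSol a b s h) (greenSolDeriv a b s h x) x := by
  have hI₂ := ((Continuous.integral_hasStrictDerivAt (by fun_prop : Continuous
    fun y => sinh (s * (b - y)) * h y) b x).hasDerivAt)
  have hI₁ := ((Continuous.integral_hasStrictDerivAt (by fun_prop : Continuous
    fun y => sinh (s * (y - a)) * h y) a x).hasDerivAt)
  have hl := (((hasDerivAt_id' x).sub_const a).const_mul s).sinh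
  have hr := (((hasDerivAt_id' x).const_sub b).const_mul s).sinh
  refine (((hl.mul hI₂).sub (hr.mul hI₁)).div_const _).congr_deriv ?_
  simp only [greenSolDeriv]
  field_simp
  ring

theorem hasDerivAt_greenSolDeriv (hs : s ≠ 0) (hab : a ≠ b) (hh : Continuous h) (x : ℝ) :
    HasDerivAt (greenSolDeriv a b s h) (s ^ 2 * greenSol a b s h x + h x) x := by
  have hI₂ := ((Continuous.integral_hasStrictDerivAt (by fun_prop : Continuous
    fun y => sinh (s * (b - y)) * h y) b x).hasDerivAt)
  have hI₁ := ((Continuous.integral_hasStrictDerivAt (by fun_prop : Continuous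
    fun y => sinh (s * (y - a)) * h y) a x).hasDerivAt)
  have hl := (((hasDerivAt_id' x).sub_const a).const_mul s).cosh
  have hr := (((hasDerivAt_id' x).const_sub b).const_mul s).cosh
  have hsinh : sinh (s * (b - a)) ≠ 0 := sinh_ne_zero.2 (mul_ne_zero hs (sub_ne_zero.2 hab.symm))
  have hadd : sinh (s * (b - a)) = sinh (s * (x - a)) * cosh (s * (b - x))
      + cosh (s * (x - a)) * sinh (s * (b - x)) := by
    rw [← sinh_add]; ring_nf
  refine (((hl.mul hI₂).add (hr.mul hI₁)).div_const _).congr_deriv ?_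
  simp only [greenSol]
  field_simp
  linear_combination (-h x) * hadd

theorem continuous_greenSol (hs : s ≠ 0) (hh : Continuous h) : Continuous (greenSol a b s h) :=
  continuous_iff_continuousAt.2 fun x => (hasDerivAt_greenSol hs hh x).continuousAt

end greenSol

section barrier

variable {a b s D : ℝ} {w w' k : ℝ → ℝ}

theorem le_of_hasDerivAt_sq_mul_add (hs : s ≠ 0) (hD : 0 ≤ D) (hw : ContinuousOn w (Icc a b))
    (hw' : ∀ x ∈ Ioo a b, HasDerivAt w (w' x) x)
    (hw'' : ∀ x ∈ Ioo a b, HasDerivAt w' (s ^ 2 * w x + k x) x) (ha : w a ≤ 0) (hb : w b ≤ 0)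
    (hk : ∀ x ∈ Ioo a b, -D ≤ k x) :
    ∀ x ∈ Icc a b, w x ≤ D / s ^ 2 * (1 - 1 / cosh (s * (b - a) / 2)) := by
  set C := cosh (s * (b - a) / 2)
  have hC : 0 < C := cosh_pos _
  set B := fun x => D / s ^ 2 * (1 - cosh (s * (x - (a + b) / 2)) / C)
  set B' := fun x => -(D / s ^ 2) * (sinh (s * (x - (a + b) / 2)) * s / C)
  have hB : ∀ x, HasDerivAt B (B' x) x := fun x =>
    (((((hasDerivAt_id' x).sub_const ((a + b) / 2)).const_mul s).cosh.div_const C).const_sub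
      1 |>.const_mul (D / s ^ 2)).congr_deriv (by simp only [B']; ring)
  have hB' : ∀ x, HasDerivAt B' (s ^ 2 * B x - D) x := fun x =>
    (((((hasDerivAt_id' x).sub_const ((a + b) / 2)).const_mul s).sinh.mul_const s).div_const C
      |>.const_mul (-(D / s ^ 2))).congr_deriv (by simp only [B]; field_simp; ring)
  have hBa : B a = 0 := by
    simp only [B]
    rw [show s * (a - (a + b) / 2) = -(s * (b - a) / 2) by ring, cosh_neg, div_self hC.ne']
    ring
  have hBb : B b = 0 := by
    simp only [B]
    rw [show s * (b - (a + b) / 2) = s * (b - a) / 2 by ring, div_self hC.ne']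
    ring
  have := nonpos_of_deriv2_pos (v := w - B) (v' := w' - B')
    (v'' := fun x => s ^ 2 * (w x - B x) + (k x + D))
    (hw.sub (continuous_iff_continuousAt.2 fun x => (hB x).continuousAt).continuousOn)
    (fun x hx => (hw' x hx).sub (hB x))
    (fun x hx => ((hw'' x hx).sub (hB' x)).congr_deriv (by ring))
    (by simpa [hBa] using ha) (by simpa [hBb] using hb)
    (fun x hx hpos => add_pos_of_pos_of_nonneg (mul_pos (by positivity) hpos)
      (by linarith [hk x hx]))
  intro x hx
  have hBle : B x ≤ D / s ^ 2 * (1 - 1 / C) := by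
    simp only [B]
    gcongr
    exact one_le_cosh _
  linarith [sub_nonpos.1 (this x hx)]

theorem abs_le_of_hasDerivAt_sq_mul_add (hs : s ≠ 0) (hD : 0 ≤ D) (hw : ContinuousOn w (Icc a b))
    (hw' : ∀ x ∈ Ioo a b, HasDerivAt w (w' x) x)
    (hw'' : ∀ x ∈ Ioo a b, HasDerivAt w' (s ^ 2 * w x + k x) x) (ha : w a = 0) (hb : w b = 0)
    (hk : ∀ x ∈ Ioo a b, |k x| ≤ D) :
    ∀ x ∈ Icc a b, |w x| ≤ D / s ^ 2 * (1 - 1 / cosh (s * (b - a) / 2)) := by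
  intro x hx
  have hup := le_of_hasDerivAt_sq_mul_add hs hD hw hw' hw'' ha.le hb.le
    (fun x hx => (abs_le.1 (hk x hx)).1) x hx
  have hlow : -w x ≤ _ := le_of_hasDerivAt_sq_mul_add (w := -w) (w' := -w') (k := -k) hs hD hw.neg
    (fun x hx => (hw' x hx).neg) (fun x hx => ((hw'' x hx).neg).congr_deriv (by simp; ring))
    (by simp [ha]) (by simp [hb]) (fun x hx => by simpa using (abs_le.1 (hk x hx)).2) x hx
  exact abs_le.2 ⟨by linarith, hup⟩

end barrier

theorem abs_greenSol_sub_le {a b s D : ℝ} {h₁ h₂ : ℝ → ℝ} (hs : s ≠ 0) (hab : a ≠ b)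
    (hh₁ : Continuous h₁) (hh₂ : Continuous h₂) (hD : 0 ≤ D)
    (hh : ∀ x ∈ Ioo a b, |h₁ x - h₂ x| ≤ D) (x : ℝ) (hx : x ∈ Icc a b) :
    |greenSol a b s h₁ x - greenSol a b s h₂ x| ≤ D / s ^ 2 * (1 - 1 / cosh (s * (b - a) / 2)) :=
  abs_le_of_hasDerivAt_sq_mul_add (w := greenSol a b s h₁ - greenSol a b s h₂)
    (w' := greenSolDeriv a b s h₁ - greenSolDeriv a b s h₂) (k := h₁ - h₂) hs hD
    ((continuous_greenSol hs hh₁).sub (continuous_greenSol hs hh₂)).continuousOn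
    (fun x _ => (hasDerivAt_greenSol hs hh₁ x).sub (hasDerivAt_greenSol hs hh₂ x))
    (fun x _ => ((hasDerivAt_greenSolDeriv hs hab hh₁ x).sub
      (hasDerivAt_greenSolDeriv hs hab hh₂ x)).congr_deriv (by simp; ring))
    (by simp) (by simp) hh x hx

theorem abs_greenSol_comp_sub_le {a b s : ℝ} {μ : NNReal} {H : ℝ → ℝ} (hs : s ≠ 0)
    (hs2 : s ^ 2 = μ) (hab : a < b) (hH : LipschitzWith μ H) (ψ₁ ψ₂ : C(Icc a b, ℝ)) (x : ℝ)
    (hx : x ∈ Icc a b) :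
    |greenSol a b s (H ∘ ψ₁.IccExtend hab.le) x - greenSol a b s (H ∘ ψ₂.IccExtend hab.le) x|
      ≤ (1 - 1 / cosh (s * (b - a) / 2)) * dist ψ₁ ψ₂ := by
  have hHψ : ∀ y, |(H ∘ ψ₁.IccExtend hab.le) y - (H ∘ ψ₂.IccExtend hab.le) y|
      ≤ μ * dist ψ₁ ψ₂ := fun y => by
    rw [← Real.dist_eq]
    exact (hH.dist_le_mul _ _).trans (mul_le_mul_of_nonneg_left
      (ContinuousMap.dist_apply_le_dist (projIcc a b hab.le y)) μ.2)
  have := abs_greenSol_sub_le hs hab.ne (hH.continuous.comp (ψ₁.IccExtend hab.le).continuous)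
    (hH.continuous.comp (ψ₂.IccExtend hab.le).continuous) (by positivity) (fun y _ => hHψ y) x hx
  rwa [← hs2, mul_div_cancel_left₀ _ (pow_ne_zero 2 hs), mul_comm] at this

theorem Antitone.lipschitzWith_add_mul {f : ℝ → ℝ} {K : NNReal} (hf : Antitone f)
    (hL : LipschitzWith K f) : LipschitzWith K fun u => f u + K * u := by
  refine LipschitzWith.of_dist_le_mul fun u v => ?_
  wlog huv : u ≤ v generalizing u v
  · simpa only [dist_comm] using this v u (le_of_not_ge huv)
  have hfuv : f u - f v ≤ K * (v - u) := by
    simpa [Real.dist_eq, abs_of_nonneg (sub_nonneg.2 (hf huv)), abs_of_nonpos (sub_nonpos.2 huv)]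
      using hL.dist_le_mul u v
  rw [Real.dist_eq, Real.dist_eq, abs_of_nonpos (sub_nonpos.2 huv), abs_le]
  constructor <;> nlinarith [hf huv, K.2]

theorem exists_isPBSol_of_lipschitzWith {f : ℝ → ℝ} {K : NNReal} (hf : Antitone f)
    (hL : LipschitzWith K f) {a b : ℝ} (hab : a < b) (φ₀ : ℝ) :
    ∃ φ u, IsPBSol f a b φ u ∧ φ a = φ₀ ∧ φ b = φ₀ := by
  set μ : NNReal := K + 1
  set s := √(μ : ℝ)
  have hs : s ≠ 0 := (sqrt_pos.2 (by positivity)).ne'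
  have hs2 : s ^ 2 = μ := sq_sqrt μ.2
  -- `φ = φ₀ + w` solves the problem iff `w'' - s² w = H (φ₀ + w)`
  set H : ℝ → ℝ := fun y => -(f y + μ * y) + μ * φ₀
  have hHL : LipschitzWith μ H := LipschitzWith.of_dist_le_mul fun u v => by
    have := (hf.lipschitzWith_add_mul (hL.weaken (le_self_add : K ≤ μ))).dist_le_mul u v
    rwa [← dist_neg_neg, ← dist_add_right _ _ ((μ : ℝ) * φ₀)] at this
  have hHψ (ψ : C(Icc a b, ℝ)) : Continuous (H ∘ ψ.IccExtend hab.le) :=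
    hHL.continuous.comp (ψ.IccExtend hab.le).continuous
  let T (ψ : C(Icc a b, ℝ)) : C(Icc a b, ℝ) :=
    ⟨fun p => φ₀ + greenSol a b s (H ∘ ψ.IccExtend hab.le) p,
      (continuous_const.add (continuous_greenSol hs (hHψ ψ))).comp continuous_subtype_val⟩
  set ρ := 1 - 1 / cosh (s * (b - a) / 2)
  have hρ : 0 ≤ ρ := sub_nonneg.2 ((div_le_one (cosh_pos _)).2 (one_le_cosh _))
  have hT (ψ₁ ψ₂ : C(Icc a b, ℝ)) : dist (T ψ₁) (T ψ₂) ≤ ρ * dist ψ₁ ψ₂ :=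
    (ContinuousMap.dist_le (by positivity)).2 fun p => by
      simpa only [T, ContinuousMap.coe_mk, add_sub_add_left_eq_sub, Real.dist_eq] using
        abs_greenSol_comp_sub_le hs hs2 hab hHL ψ₁ ψ₂ p p.2
  have hcontr : ContractingWith ⟨ρ, hρ⟩ T :=
    ⟨NNReal.coe_lt_coe.1 (sub_lt_self 1 (one_div_pos.2 (cosh_pos _))),
      LipschitzWith.of_dist_le_mul hT⟩
  set ψ := ContractingWith.fixedPoint T hcontr
  set h := H ∘ ψ.IccExtend hab.le
  have hfix : T ψ = ψ := hcontr.fixedPoint_isFixedPt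
  have hψ : ∀ x ∈ Icc a b, ψ.IccExtend hab.le x = φ₀ + greenSol a b s h x := fun x hx => by
    rw [ContinuousMap.coe_IccExtend, IccExtend_of_mem _ _ hx]
    exact (DFunLike.congr_fun hfix ⟨x, hx⟩).symm
  refine ⟨fun x => φ₀ + greenSol a b s h x, greenSolDeriv a b s h, fun x hx => ⟨?_, ?_⟩,
    by simp, by simp⟩
  · exact ((hasDerivAt_greenSol hs (hHψ ψ) x).const_add φ₀).hasDerivWithinAt
  · refine (hasDerivAt_greenSolDeriv hs hab.ne (hHψ ψ) x).hasDerivWithinAt.congr_deriv ?_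
    simp only [h, Function.comp_apply, hψ x hx, H, hs2]
    ring

theorem exists_isPBSol_of_locallyLipschitz {f : ℝ → ℝ} (hf : Antitone f) (hL : LocallyLipschitz f)
    {a b : ℝ} (hab : a < b) (φ₀ : ℝ) : ∃ φ u, IsPBSol f a b φ u ∧ φ a = φ₀ ∧ φ b = φ₀ := by
  -- by `IsPBSol.abs_sub_le` solutions stay in `I`, so only the values of `f` on `I` matter
  set r := (|f φ₀| + 1) / 2 * ((b - a) ^ 2 / 4)
  have hr : 0 ≤ r := by positivity
  have hI : φ₀ - r ≤ φ₀ + r := by linarith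
  set I := Icc (φ₀ - r) (φ₀ + r)
  obtain ⟨K, hK⟩ := hL.locallyLipschitzOn.exists_lipschitzOnWith_of_compact (s := I) isCompact_Icc
  set g := IccExtend hI (I.domRestrict f)
  have hgf : ∀ y ∈ I, g y = f y := fun y hy => IccExtend_of_mem _ _ hy
  have hg : Antitone g :=
    (show Antitone (I.domRestrict f) from fun _ _ h => hf h).comp_monotone (monotone_projIcc hI)
  obtain ⟨φ, u, hsol, ha, hb⟩ := exists_isPBSol_of_lipschitzWith hg
    (hK.to_restrict.comp (LipschitzWith.projIcc hI) : LipschitzWith (K * 1) g) hab φ₀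
  have hmem : ∀ x ∈ Icc a b, φ x ∈ I := fun x hx => by
    have hbound := hsol.abs_sub_le hg ha hb x hx
    rw [hgf φ₀ ⟨by linarith, by linarith⟩] at hbound
    have : (x - a) * (b - x) ≤ (b - a) ^ 2 / 4 := by nlinarith [sq_nonneg (2 * x - a - b)]
    rw [abs_sub_comm] at hbound
    exact mem_Icc_iff_abs_le.1 (hbound.trans (mul_le_mul_of_nonneg_left this (by positivity)))
  exact ⟨φ, u, hsol.congr fun x hx => hgf _ (hmem x hx), ha, hb⟩

theorem strictAnti_const_add_sum_mul_exp {ι : Type*} [Fintype ι] [Nonempty ι] {z c : ι → ℝ}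
    (hz : ∀ j, z j ≠ 0) (hc : ∀ j, 0 < c j) (q₀ : ℝ) :
    StrictAnti fun φ => q₀ + ∑ j, z j * c j * exp (-z j * φ) := by
  intro x y hxy
  refine add_lt_add_right
    (Finset.sum_lt_sum_of_nonempty (Finset.univ_nonempty (α := ι)) fun j _ => ?_) q₀
  have := hc j
  rcases (hz j).lt_or_gt with hneg | hpos
  · exact mul_lt_mul_of_neg_left (exp_lt_exp.2 (by nlinarith)) (by nlinarith)
  · exact mul_lt_mul_of_pos_left (exp_lt_exp.2 (by nlinarith)) (by positivity)

/-- For every `L > 0` and every `φ0`, the Dirichlet problem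
`φ'' + f(φ) = 0` on `[-L/2, L/2]`, `φ(-L/2) = φ(L/2) = φ0`, has exactly one
twice continuously differentiable solution. -/
theorem stmt3 {N : ℕ} (hN : 1 ≤ N) (z c : Fin N → ℝ)
    (hz : ∀ j, z j ≠ 0) (hc : ∀ j, 0 < c j) (q0 : ℝ)
    (f : ℝ → ℝ)
    (hf : ∀ φ : ℝ, f φ = q0 + ∑ j, z j * c j * Real.exp (-(z j) * φ))
    (L : ℝ) (hL : 0 < L) (φ0 : ℝ) :
    (∃ φ u : ℝ → ℝ, IsPBSol f (-(L / 2)) (L / 2) φ u ∧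
      φ (-(L / 2)) = φ0 ∧ φ (L / 2) = φ0) ∧
    (∀ φ₁ u₁ φ₂ u₂ : ℝ → ℝ,
      IsPBSol f (-(L / 2)) (L / 2) φ₁ u₁ →
      IsPBSol f (-(L / 2)) (L / 2) φ₂ u₂ →
      φ₁ (-(L / 2)) = φ0 → φ₁ (L / 2) = φ0 →
      φ₂ (-(L / 2)) = φ0 → φ₂ (L / 2) = φ0 →
      ∀ x ∈ Set.Icc (-(L / 2)) (L / 2), φ₁ x = φ₂ x) := by
  have : Nonempty (Fin N) := ⟨⟨0, hN⟩⟩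
  obtain rfl : f = fun φ => q0 + ∑ j, z j * c j * exp (-z j * φ) := funext hf
  have hanti := strictAnti_const_add_sum_mul_exp hz hc q0
  have hC1 : ContDiff ℝ 1 fun φ => q0 + ∑ j, z j * c j * exp (-z j * φ) := by fun_prop
  refine ⟨exists_isPBSol_of_locallyLipschitz hanti.antitone hC1.locallyLipschitz
    (by linarith) φ0, fun φ₁ u₁ φ₂ u₂ h₁ h₂ h₁a h₁b h₂a h₂b x hx => le_antisymm ?_ ?_⟩
  · exact h₁.le_of_le_boundary hanti h₂ (h₁a.trans h₂a.symm).le (h₁b.trans h₂b.symm).le x hx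
  · exact h₂.le_of_le_boundary hanti h₁ (h₂a.trans h₁a.symm).le (h₂b.trans h₁b.symm).le x hx
end

section
/- Assume either z_i z_j < 0 for some i, j, or z_j q_0 < 0 for all j, let φ* be the unique zero of f, and fix φ_0 < φ*. For α ∈ (φ_0, φ*) define the time-map T(α) = √2 ∫_{φ_0}^{α} (F(α) − F(φ))^{−1/2} dφ. Then T(α) is a finite convergent integral for every α ∈ (φ_0, φ*), T is strictly increasing on (φ_0, φ*), T(α) → 0 as α → φ_0⁺, and T(α) → +∞ as α → φ*⁻. -/
open Real Filter Set Topology MeasureTheory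

/-!
Since `f' = -∑ z_j² c_j e^{-z_j φ} < 0`, `f` is strictly decreasing and positive left of `φ*`,
and the mean value theorem gives `f α (α - φ) ≤ F α - F φ ≤ f φ (α - φ)` for `φ ≤ α`.
The lower bound makes the singularity of the integrand at `φ = α` of order `(α - φ)^{-1/2}`;
this gives convergence and `T α ≤ 2√2 √((α - φ0) / f α) → 0`. The upper bound, with
`f φ ≤ K (φ* - φ)` for a Lipschitz constant `K` of `f`, gives
`T α ≥ √(2/K) log ((φ* - φ0) / (φ* - α)) → ∞`. For monotonicity substitute
`φ = φ0 + (α - φ0) t`: then `T α = √2 ∫₀¹ G_α(t)^{-1/2} dt` with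
`G_α(t) = ∫ₜ¹ f (φ0 + (α - φ0) u) / (α - φ0) du`, and this integrand is strictly decreasing in `α`.
-/

section TimeMap

variable {f F : ℝ → ℝ} {a b φ0 φstar α β : ℝ}

lemma Antitone.mul_sub_le_sub_of_hasDerivAt (hf : Antitone f)
    (hF : ∀ x, HasDerivAt F (f x) x) (hab : a ≤ b) : f b * (b - a) ≤ F b - F a :=
  (convex_Icc a b).mul_sub_le_image_sub_of_le_deriv
    (fun x _ => (hF x).continuousAt.continuousWithinAt)
    (fun x _ => (hF x).differentiableAt.differentiableWithinAt)
    (fun x hx => (hF x).deriv ▸ hf (interior_subset hx).2)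
    a (left_mem_Icc.2 hab) b (right_mem_Icc.2 hab) hab

lemma Antitone.sub_le_mul_sub_of_hasDerivAt (hf : Antitone f)
    (hF : ∀ x, HasDerivAt F (f x) x) (hab : a ≤ b) : F b - F a ≤ f a * (b - a) :=
  (convex_Icc a b).image_sub_le_mul_sub_of_deriv_le
    (fun x _ => (hF x).continuousAt.continuousWithinAt)
    (fun x _ => (hF x).differentiableAt.differentiableWithinAt)
    (fun x hx => (hF x).deriv ▸ hf (interior_subset hx).1)
    a (left_mem_Icc.2 hab) b (right_mem_Icc.2 hab) hab

lemma one_div_sqrt_le_of_mul_le {m t D : ℝ} (hm : 0 < m) (ht : 0 < t) (h : m * t ≤ D) :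
    1 / √D ≤ 1 / √m * t ^ (-(1 / 2) : ℝ) := by
  rw [rpow_neg ht.le, ← sqrt_eq_rpow, ← one_div, one_div_mul_one_div, ← sqrt_mul hm.le]
  exact one_div_le_one_div_of_le (sqrt_pos.2 (mul_pos hm ht)) (sqrt_le_sqrt h)

lemma integral_rpow_neg_half_sub :
    ∫ x in a..b, (b - x) ^ (-(1 / 2) : ℝ) = 2 * √(b - a) := by
  rw [intervalIntegral.integral_comp_sub_left (fun t => t ^ (-(1 / 2) : ℝ)) b, sub_self,
    integral_rpow (Or.inl (by norm_num)), zero_rpow (by norm_num), sqrt_eq_rpow]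
  norm_num
  ring

lemma intervalIntegrable_rpow_neg_half_sub :
    IntervalIntegrable (fun x => (b - x) ^ (-(1 / 2) : ℝ)) volume a b := by
  simpa using ((intervalIntegral.intervalIntegrable_rpow' (r := -(1 / 2)) (by norm_num)
    (a := 0) (b := b - a)).comp_sub_left b).symm

lemma IntervalIntegrable.of_abs_le_mul_rpow_neg_half_sub {g : ℝ → ℝ} {C : ℝ} (hab : a ≤ b)
    (hg : AEStronglyMeasurable g (volume.restrict (Ioo a b)))
    (hbound : ∀ x ∈ Ioo a b, |g x| ≤ C * (b - x) ^ (-(1 / 2) : ℝ)) :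
    IntervalIntegrable g volume a b := by
  have hC := (intervalIntegrable_rpow_neg_half_sub (a := a) (b := b)).const_mul C
  rw [intervalIntegrable_iff_integrableOn_Ioo_of_le hab] at hC ⊢
  exact hC.mono' hg ((ae_restrict_iff' measurableSet_Ioo).2 (ae_of_all _ hbound))

noncomputable def timeMap (F : ℝ → ℝ) (φ0 α : ℝ) : ℝ :=
  √2 * ∫ φ in φ0..α, 1 / √(F α - F φ)

lemma one_div_sqrt_sub_le (hF : ∀ x, HasDerivAt F (f x) x) (hf : Antitone f) (hfα : 0 < f α)
    {φ : ℝ} (hφ : φ < α) : 1 / √(F α - F φ) ≤ 1 / √(f α) * (α - φ) ^ (-(1 / 2) : ℝ) :=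
  one_div_sqrt_le_of_mul_le hfα (sub_pos.2 hφ) (hf.mul_sub_le_sub_of_hasDerivAt hF hφ.le)

lemma intervalIntegrable_one_div_sqrt_sub (hF : ∀ x, HasDerivAt F (f x) x) (hf : Antitone f)
    (hα : φ0 < α) (hfα : 0 < f α) :
    IntervalIntegrable (fun φ => 1 / √(F α - F φ)) volume φ0 α := by
  have hFc : Continuous F := continuous_iff_continuousAt.2 fun x => (hF x).continuousAt
  have hmeas : Measurable fun φ => 1 / √(F α - F φ) := by fun_prop
  refine .of_abs_le_mul_rpow_neg_half_sub (C := 1 / √(f α)) hα.le hmeas.aestronglyMeasurable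
    fun φ hφ => ?_
  rw [abs_of_nonneg (by positivity)]
  exact one_div_sqrt_sub_le hF hf hfα hφ.2

lemma integral_one_div_sqrt_sub_le (hF : ∀ x, HasDerivAt F (f x) x) (hf : Antitone f)
    (hα : φ0 < α) (hfα : 0 < f α) :
    ∫ φ in φ0..α, 1 / √(F α - F φ) ≤ 1 / √(f α) * (2 * √(α - φ0)) :=
  calc ∫ φ in φ0..α, 1 / √(F α - F φ)
      ≤ ∫ φ in φ0..α, 1 / √(f α) * (α - φ) ^ (-(1 / 2) : ℝ) :=
        intervalIntegral.integral_mono_on_of_le_Ioo hα.le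
          (intervalIntegrable_one_div_sqrt_sub hF hf hα hfα)
          (intervalIntegrable_rpow_neg_half_sub.const_mul _)
          fun φ hφ => one_div_sqrt_sub_le hF hf hfα hφ.2
    _ = 1 / √(f α) * (2 * √(α - φ0)) := by
        rw [intervalIntegral.integral_const_mul, integral_rpow_neg_half_sub]

lemma tendsto_timeMap_nhdsGT (hF : ∀ x, HasDerivAt F (f x) x) (hfc : Continuous f)
    (hf : Antitone f) (hf0 : 0 < f φ0) : Tendsto (timeMap F φ0) (𝓝[>] φ0) (𝓝 0) := by
  have hbound : Tendsto (fun α => √2 * (1 / √(f α) * (2 * √(α - φ0)))) (𝓝[>] φ0) (𝓝 0) := by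
    have : √(f φ0) ≠ 0 := (sqrt_pos.2 hf0).ne'
    have hcont : ContinuousAt (fun α => √2 * (1 / √(f α) * (2 * √(α - φ0)))) φ0 := by
      fun_prop (disch := assumption)
    simpa using hcont.tendsto.mono_left nhdsWithin_le_nhds
  have hpos : ∀ᶠ α in 𝓝[>] φ0, 0 < f α :=
    nhdsWithin_le_nhds (hfc.continuousAt.eventually (lt_mem_nhds hf0))
  refine tendsto_of_tendsto_of_tendsto_of_le_of_le' tendsto_const_nhds hbound ?_ ?_
  · filter_upwards [self_mem_nhdsWithin] with α (hα : φ0 < α)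
    exact mul_nonneg (sqrt_nonneg 2)
      (intervalIntegral.integral_nonneg hα.le fun _ _ => by positivity)
  · filter_upwards [self_mem_nhdsWithin, hpos] with α (hα : φ0 < α) hfα
    exact mul_le_mul_of_nonneg_left (integral_one_div_sqrt_sub_le hF hf hα hfα) (sqrt_nonneg 2)

lemma mul_log_div_le_integral_one_div_sqrt_sub {L : ℝ} (hF : ∀ x, HasDerivAt F (f x) x)
    (hf : Antitone f) (hα : φ0 < α) (hαs : α < φstar) (hfα : 0 < f α)
    (hfL : ∀ t ∈ Icc φ0 α, f t ≤ L * (φstar - t)) :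
    1 / √L * log ((φstar - φ0) / (φstar - α)) ≤ ∫ φ in φ0..α, 1 / √(F α - F φ) := by
  have hL : 0 < L :=
    pos_of_mul_pos_left (hfα.trans_le (hfL α (right_mem_Icc.2 hα.le))) (by linarith)
  have hbound : ∀ φ ∈ Ioo φ0 α, 1 / √L * (φstar - φ)⁻¹ ≤ 1 / √(F α - F φ) := by
    intro φ hφ
    have hgap : F α - F φ ≤ (√L * (φstar - φ)) ^ 2 :=
      calc F α - F φ ≤ f φ * (α - φ) := hf.sub_le_mul_sub_of_hasDerivAt hF hφ.2.le
        _ ≤ L * (φstar - φ) * (φstar - φ) :=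
          mul_le_mul (hfL φ (Ioo_subset_Icc_self hφ)) (by linarith [hφ.2])
            (by linarith [hφ.2]) (by nlinarith [hφ.2])
        _ = (√L * (φstar - φ)) ^ 2 := by rw [mul_pow, sq_sqrt hL.le]; ring
    have hpos : 0 < F α - F φ := (mul_pos hfα (sub_pos.2 hφ.2)).trans_le
      (hf.mul_sub_le_sub_of_hasDerivAt hF hφ.2.le)
    rw [← one_div, one_div_mul_one_div]
    exact one_div_le_one_div_of_le (sqrt_pos.2 hpos)
      ((sqrt_le_sqrt hgap).trans_eq (sqrt_sq (by nlinarith [sqrt_nonneg L, hφ.2])))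
  have hint : IntervalIntegrable (fun φ => 1 / √L * (φstar - φ)⁻¹) volume φ0 α :=
    (ContinuousOn.inv₀ (by fun_prop) fun φ hφ => by
      rw [uIcc_of_le hα.le] at hφ; linarith [hφ.2]).intervalIntegrable.const_mul _
  calc 1 / √L * log ((φstar - φ0) / (φstar - α))
      = ∫ φ in φ0..α, 1 / √L * (φstar - φ)⁻¹ := by
        rw [intervalIntegral.integral_const_mul,
          intervalIntegral.integral_comp_sub_left (fun x => x⁻¹),
          integral_inv_of_pos (by linarith) (by linarith)]
    _ ≤ ∫ φ in φ0..α, 1 / √(F α - F φ) :=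
        intervalIntegral.integral_mono_on_of_le_Ioo hα.le hint
          (intervalIntegrable_one_div_sqrt_sub hF hf hα hfα) hbound

lemma tendsto_timeMap_nhdsLT {K : NNReal} (hF : ∀ x, HasDerivAt F (f x) x) (hf : StrictAnti f)
    (hstar : f φstar = 0) (hφ0 : φ0 < φstar) (hfK : LipschitzOnWith K f (Icc φ0 φstar)) :
    Tendsto (timeMap F φ0) (𝓝[<] φstar) atTop := by
  have hfL : ∀ t ∈ Icc φ0 φstar, f t ≤ K * (φstar - t) := fun t ht => by
    have := hfK.dist_le_mul t ht φstar (right_mem_Icc.2 hφ0.le)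
    rw [Real.dist_eq, Real.dist_eq, hstar, sub_zero, abs_sub_comm,
      abs_of_nonneg (sub_nonneg.2 ht.2)] at this
    exact (le_abs_self _).trans this
  have hK : (0 : ℝ) < K := pos_of_mul_pos_left
    ((hstar ▸ hf hφ0 : 0 < f φ0).trans_le (hfL φ0 (left_mem_Icc.2 hφ0.le))) (by linarith)
  have hgap : Tendsto (fun α => φstar - α) (𝓝[<] φstar) (𝓝[>] 0) := by
    refine tendsto_nhdsWithin_iff.2 ⟨?_, ?_⟩
    · simpa only [sub_self] using ((continuous_sub_left φstar).tendsto φstar).mono_left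
        (nhdsWithin_le_nhds (s := Iio φstar))
    · filter_upwards [self_mem_nhdsWithin] with α (hα : α < φstar) using sub_pos.2 hα
  have hratio : Tendsto (fun α => (φstar - φ0) / (φstar - α)) (𝓝[<] φstar) atTop := by
    simpa only [div_eq_mul_inv, Function.comp_apply] using
      (tendsto_inv_nhdsGT_zero.comp hgap).const_mul_atTop (sub_pos.2 hφ0)
  have hlog := ((tendsto_log_atTop.comp hratio).const_mul_atTop
    (by positivity : (0 : ℝ) < 1 / √K)).const_mul_atTop (by positivity : (0 : ℝ) < √2)
  refine tendsto_atTop_mono' _ ?_ hlog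
  filter_upwards [Ioo_mem_nhdsLT hφ0] with α hα
  exact mul_le_mul_of_nonneg_left (mul_log_div_le_integral_one_div_sqrt_sub hF hf.antitone
    hα.1 hα.2 (hstar ▸ hf hα.2) fun t ht => hfL t ⟨ht.1, ht.2.trans hα.2.le⟩) (sqrt_nonneg 2)

noncomputable def scaledGap (F : ℝ → ℝ) (φ0 α t : ℝ) : ℝ :=
  (F α - F ((α - φ0) * t + φ0)) / (α - φ0) ^ 2

lemma one_div_sqrt_scaledGap (hα : φ0 < α) (t : ℝ) :
    1 / √(scaledGap F φ0 α t) = (α - φ0) * (1 / √(F α - F ((α - φ0) * t + φ0))) := by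
  rw [scaledGap, sqrt_div' _ (sq_nonneg _), sqrt_sq (sub_pos.2 hα).le, one_div_div,
    div_eq_mul_one_div]

lemma integral_one_div_sqrt_scaledGap (hα : φ0 < α) :
    ∫ t in (0 : ℝ)..1, 1 / √(scaledGap F φ0 α t) = ∫ φ in φ0..α, 1 / √(F α - F φ) := by
  simp_rw [one_div_sqrt_scaledGap hα]
  rw [intervalIntegral.integral_const_mul,
    intervalIntegral.integral_comp_mul_add (fun φ => 1 / √(F α - F φ)) (sub_pos.2 hα).ne',
    smul_eq_mul, mul_zero, zero_add, mul_one, sub_add_cancel,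
    mul_inv_cancel_left₀ (sub_pos.2 hα).ne']

lemma IntervalIntegrable.one_div_sqrt_scaledGap (hα : φ0 < α)
    (h : IntervalIntegrable (fun φ => 1 / √(F α - F φ)) volume φ0 α) :
    IntervalIntegrable (fun t => 1 / √(scaledGap F φ0 α t)) volume 0 1 := by
  simp_rw [_root_.one_div_sqrt_scaledGap hα]
  refine .const_mul ?_ _
  simpa [(sub_pos.2 hα).ne'] using (h.comp_add_right φ0).comp_mul_left (c := α - φ0)

lemma scaledGap_eq_integral (hF : ∀ x, HasDerivAt F (f x) x) (hfc : Continuous f)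
    (hα : φ0 < α) (t : ℝ) :
    scaledGap F φ0 α t = ∫ u in t..1, f ((α - φ0) * u + φ0) / (α - φ0) := by
  have hh : α - φ0 ≠ 0 := (sub_pos.2 hα).ne'
  rw [intervalIntegral.integral_div, intervalIntegral.integral_comp_mul_add f hh, mul_one,
    sub_add_cancel, intervalIntegral.integral_eq_sub_of_hasDerivAt (fun x _ => hF x)
      (hfc.intervalIntegrable _ _), scaledGap, smul_eq_mul]
  field_simp

lemma scaledGap_pos (hF : ∀ x, HasDerivAt F (f x) x) (hf : Antitone f) (hα : φ0 < α)
    (hfα : 0 < f α) {t : ℝ} (ht : t < 1) : 0 < scaledGap F φ0 α t := by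
  have hlt : (α - φ0) * t + φ0 < α := by nlinarith
  exact div_pos ((mul_pos hfα (sub_pos.2 hlt)).trans_le
    (hf.mul_sub_le_sub_of_hasDerivAt hF hlt.le)) (pow_pos (sub_pos.2 hα) 2)

lemma scaledGap_lt_scaledGap (hF : ∀ x, HasDerivAt F (f x) x) (hfc : Continuous f)
    (hf : StrictAnti f) (hα : φ0 < α) (hαβ : α < β) (hfβ : 0 < f β) {t : ℝ}
    (ht : t ∈ Ico (0 : ℝ) 1) : scaledGap F φ0 β t < scaledGap F φ0 α t := by
  have hintegrand : ∀ u ∈ Ioc (0 : ℝ) 1,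
      f ((β - φ0) * u + φ0) / (β - φ0) < f ((α - φ0) * u + φ0) / (α - φ0) := by
    intro u hu
    have hαu : (α - φ0) * u + φ0 ≤ α := by nlinarith [hu.2]
    refine div_lt_div₀ (hf (by nlinarith [hu.1])) (by linarith) ?_ (sub_pos.2 hα)
    exact (hfβ.trans (hf (hαu.trans_lt hαβ))).le
  rw [scaledGap_eq_integral hF hfc (hα.trans hαβ), scaledGap_eq_integral hF hfc hα]
  exact intervalIntegral.integral_lt_integral_of_continuousOn_of_le_of_exists_lt ht.2
    (by fun_prop) (by fun_prop) (fun u hu => (hintegrand u ⟨ht.1.trans_lt hu.1, hu.2⟩).le)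
    ⟨1, right_mem_Icc.2 ht.2.le, hintegrand 1 ⟨one_pos, le_rfl⟩⟩

lemma strictMonoOn_timeMap (hF : ∀ x, HasDerivAt F (f x) x) (hfc : Continuous f)
    (hf : StrictAnti f) (hstar : f φstar = 0) :
    StrictMonoOn (timeMap F φ0) (Ioo φ0 φstar) := by
  have hpos : ∀ γ ∈ Ioo φ0 φstar, 0 < f γ := fun γ hγ => hstar ▸ hf hγ.2
  have hint : ∀ γ ∈ Ioo φ0 φstar,
      IntervalIntegrable (fun t => 1 / √(scaledGap F φ0 γ t)) volume 0 1 := fun γ hγ =>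
    (intervalIntegrable_one_div_sqrt_sub hF hf.antitone hγ.1 (hpos γ hγ)).one_div_sqrt_scaledGap
      hγ.1
  intro α hα β hβ hαβ
  rw [timeMap, timeMap, ← integral_one_div_sqrt_scaledGap hα.1,
    ← integral_one_div_sqrt_scaledGap hβ.1]
  refine mul_lt_mul_of_pos_left ?_ (by positivity)
  rw [← sub_pos, ← intervalIntegral.integral_sub (hint β hβ) (hint α hα)]
  refine intervalIntegral.intervalIntegral_pos_of_pos_on ((hint β hβ).sub (hint α hα))
    (fun t ht => sub_pos.2 ?_) zero_lt_one
  have hβt := scaledGap_pos hF hf.antitone hβ.1 (hpos β hβ) ht.2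
  exact one_div_lt_one_div_of_lt (sqrt_pos.2 hβt) (sqrt_lt_sqrt hβt.le
    (scaledGap_lt_scaledGap hF hfc hf hα.1 hαβ (hpos β hβ) ⟨ht.1.le, ht.2⟩))

end TimeMap

section ExpSum

variable {ι : Type*} [Fintype ι] (q0 : ℝ) (z c : ι → ℝ)

lemma hasDerivAt_mul_sub_sum_exp (x : ℝ) :
    HasDerivAt (fun φ => q0 * φ - ∑ j, c j * exp (-z j * φ))
      (q0 + ∑ j, z j * c j * exp (-z j * x)) x := by
  have hterm : ∀ j, HasDerivAt (fun φ => c j * exp (-z j * φ))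
      (-(z j * c j * exp (-z j * x))) x := fun j =>
    (((hasDerivAt_id' x).const_mul (-z j)).exp.const_mul (c j)).congr_deriv (by ring)
  refine (((hasDerivAt_id' x).const_mul q0).fun_sub
    (HasDerivAt.fun_sum fun j _ => hterm j)).congr_deriv ?_
  rw [Finset.sum_neg_distrib]
  ring

lemma hasDerivAt_add_sum_exp (x : ℝ) :
    HasDerivAt (fun φ => q0 + ∑ j, z j * c j * exp (-z j * φ))
      (-∑ j, z j ^ 2 * c j * exp (-z j * x)) x := by
  have hterm : ∀ j, HasDerivAt (fun φ => z j * c j * exp (-z j * φ))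
      (-(z j ^ 2 * c j * exp (-z j * x))) x := fun j =>
    (((hasDerivAt_id' x).const_mul (-z j)).exp.const_mul (z j * c j)).congr_deriv (by ring)
  exact ((HasDerivAt.fun_sum fun j _ => hterm j).const_add q0).congr_deriv
    (Finset.sum_neg_distrib _)

lemma strictAnti_add_sum_exp [Nonempty ι] (hz : ∀ j, z j ≠ 0) (hc : ∀ j, 0 < c j) :
    StrictAnti fun φ => q0 + ∑ j, z j * c j * exp (-z j * φ) :=
  strictAnti_of_hasDerivAt_neg (hasDerivAt_add_sum_exp q0 z c) fun _ =>
    neg_neg_of_pos (Finset.sum_pos (fun j _ =>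
      mul_pos (mul_pos (sq_pos_of_ne_zero (hz j)) (hc j)) (exp_pos _)) Finset.univ_nonempty)

lemma exists_lipschitzOnWith_add_sum_exp (a b : ℝ) :
    ∃ K, LipschitzOnWith K (fun φ => q0 + ∑ j, z j * c j * exp (-z j * φ)) (Icc a b) :=
  (ContDiff.locallyLipschitz (𝕂 := ℝ) (by fun_prop)).locallyLipschitzOn
    |>.exists_lipschitzOnWith_of_compact isCompact_Icc

end ExpSum

theorem stmt4_general {N : ℕ} (hN : 1 ≤ N) (z c : Fin N → ℝ)
    (hz : ∀ j, z j ≠ 0) (hc : ∀ j, 0 < c j) (q0 : ℝ)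
    (f F : ℝ → ℝ)
    (hf : ∀ φ : ℝ, f φ = q0 + ∑ j, z j * c j * Real.exp (-(z j) * φ))
    (hF : ∀ φ : ℝ, F φ = q0 * φ - ∑ j, c j * Real.exp (-(z j) * φ))
    (φstar : ℝ) (hstar : f φstar = 0)
    (φ0 : ℝ) (hφ0 : φ0 < φstar)
    (T : ℝ → ℝ)
    (hT : ∀ α : ℝ, T α = Real.sqrt 2 * ∫ φ in φ0..α, 1 / Real.sqrt (F α - F φ)) :
    (∀ α ∈ Set.Ioo φ0 φstar,
      IntervalIntegrable (fun φ => 1 / Real.sqrt (F α - F φ)) volume φ0 α) ∧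
    StrictMonoOn T (Set.Ioo φ0 φstar) ∧
    Tendsto T (𝓝[>] φ0) (𝓝 0) ∧
    Tendsto T (𝓝[<] φstar) atTop := by
  have : Nonempty (Fin N) := ⟨⟨0, hN⟩⟩
  obtain rfl : f = fun φ => q0 + ∑ j, z j * c j * exp (-z j * φ) := funext hf
  obtain rfl : F = fun φ => q0 * φ - ∑ j, c j * exp (-z j * φ) := funext hF
  obtain rfl : T = timeMap _ φ0 := funext hT
  have hFf := hasDerivAt_mul_sub_sum_exp q0 z c
  have hanti := strictAnti_add_sum_exp q0 z c hz hc
  have hcont : Continuous fun φ => q0 + ∑ j, z j * c j * exp (-z j * φ) := by fun_prop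
  obtain ⟨K, hK⟩ := exists_lipschitzOnWith_add_sum_exp q0 z c φ0 φstar
  exact ⟨fun α hα => intervalIntegrable_one_div_sqrt_sub hFf hanti.antitone hα.1
      (hstar ▸ hanti hα.2),
    strictMonoOn_timeMap hFf hcont hanti hstar,
    tendsto_timeMap_nhdsGT hFf hcont hanti.antitone (hstar ▸ hanti hφ0),
    tendsto_timeMap_nhdsLT hFf hanti hstar hφ0 hK⟩

/-- In the saddle case, with `φ*` the unique zero of `f` and `φ0 < φ*`,
the time-map `T(α) = √2 ∫_{φ0}^{α} (F(α) - F(φ))^{-1/2} dφ` is a finite convergent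
integral for each `α ∈ (φ0, φ*)`, is strictly increasing on `(φ0, φ*)`,
tends to `0` as `α → φ0⁺`, and tends to `+∞` as `α → φ*⁻`. -/
theorem stmt4 {N : ℕ} (hN : 1 ≤ N) (z c : Fin N → ℝ)
    (hz : ∀ j, z j ≠ 0) (hc : ∀ j, 0 < c j) (q0 : ℝ)
    (f F : ℝ → ℝ)
    (hf : ∀ φ : ℝ, f φ = q0 + ∑ j, z j * c j * Real.exp (-(z j) * φ))
    (hF : ∀ φ : ℝ, F φ = q0 * φ - ∑ j, c j * Real.exp (-(z j) * φ))
    (hcase : (∃ i j, z i * z j < 0) ∨ (∀ j, z j * q0 < 0))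
    (φstar : ℝ) (hstar : f φstar = 0)
    (φ0 : ℝ) (hφ0 : φ0 < φstar)
    (T : ℝ → ℝ)
    (hT : ∀ α : ℝ, T α = Real.sqrt 2 * ∫ φ in φ0..α, 1 / Real.sqrt (F α - F φ)) :
    (∀ α ∈ Set.Ioo φ0 φstar,
      IntervalIntegrable (fun φ => 1 / Real.sqrt (F α - F φ)) volume φ0 α) ∧
    StrictMonoOn T (Set.Ioo φ0 φstar) ∧
    Tendsto T (𝓝[>] φ0) (𝓝 0) ∧
    Tendsto T (𝓝[<] φstar) atTop :=
  stmt4_general hN z c hz hc q0 f F hf hF φstar hstar φ0 hφ0 T hT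
end

section
/- Assume q_0 > 0 and z_j > 0 for all j (so the PB system has no equilibrium). Fix φ_0 ∈ ℝ and, for each L > 0, let φ_L be the unique twice continuously differentiable solution of φ″ + f(φ) = 0 on [−L/2, L/2] with φ_L(−L/2) = φ_L(L/2) = φ_0, and set σ(L) = |φ_L′(−L/2)|. Then σ(L) → +∞ as L → ∞ (no saturation of the surface charge density in the absence of equilibrium). -/
open Real Filter Set Topology

/-!
Since `q0 > 0` and every `z j > 0`, the nonlinearity satisfies `f ≥ q0`, so `φ'' ≤ -q0`: the
solution is uniformly concave. Integrating twice from the left end, a uniformly concave function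
with equal boundary values on an interval of length `L` has initial slope at least `q0 * L / 2`.
-/

lemma antitoneOn_Icc_of_hasDerivWithinAt_nonpos {F F' : ℝ → ℝ} {a b : ℝ}
    (hF : ∀ x ∈ Icc a b, HasDerivWithinAt F (F' x) (Icc a b) x)
    (hF' : ∀ x ∈ Icc a b, F' x ≤ 0) : AntitoneOn F (Icc a b) :=
  antitoneOn_of_hasDerivWithinAt_nonpos (convex_Icc a b)
    (fun x hx => (hF x hx).continuousWithinAt)
    (fun x hx => (hF x (interior_subset hx)).mono interior_subset)
    (fun x hx => hF' x (interior_subset hx))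

namespace IsPBSol

variable {f φ u : ℝ → ℝ} {a b m : ℝ}

lemma add_mul_le (h : IsPBSol f a b φ u) (hm : ∀ x ∈ Icc a b, m ≤ f (φ x)) :
    ∀ x ∈ Icc a b, u x + m * x ≤ u a + m * a := by
  have hanti : AntitoneOn (fun x => u x + m * x) (Icc a b) := by
    refine antitoneOn_Icc_of_hasDerivWithinAt_nonpos (F' := fun x => -f (φ x) + m)
      (fun x hx => ?_) (fun x hx => by linarith [hm x hx])
    simpa using (h x hx).2.fun_add ((hasDerivWithinAt_id x _).const_mul m)
  intro x hx
  exact hanti ⟨le_rfl, hx.1.trans hx.2⟩ hx hx.1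

lemma mul_sub_div_two_le (h : IsPBSol f a b φ u) (hm : ∀ x ∈ Icc a b, m ≤ f (φ x))
    (hab : a < b) (hφ : φ a = φ b) : m * (b - a) / 2 ≤ u a := by
  have hanti : AntitoneOn (fun x => φ x + m * x ^ 2 / 2 - (u a + m * a) * x) (Icc a b) := by
    refine antitoneOn_Icc_of_hasDerivWithinAt_nonpos
      (F' := fun x => u x + m * x - (u a + m * a))
      (fun x hx => ?_) (fun x hx => by linarith [h.add_mul_le hm x hx])
    have hpoly : HasDerivAt (fun x : ℝ => m * x ^ 2 / 2 - (u a + m * a) * x)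
        (m * x - (u a + m * a)) x := by
      refine ((((hasDerivAt_pow 2 x).const_mul m).div_const 2).fun_sub
        ((hasDerivAt_id' x).const_mul (u a + m * a))).congr_deriv ?_
      push_cast; ring
    simpa [add_sub_assoc] using (h x hx).1.fun_add hpoly.hasDerivWithinAt
  have hGb := hanti ⟨le_rfl, hab.le⟩ ⟨hab.le, le_rfl⟩ hab.le
  simp only [hφ] at hGb
  have : m * (b - a) / 2 * (b - a) ≤ u a * (b - a) := by linarith
  exact le_of_mul_le_mul_right this (sub_pos.2 hab)

end IsPBSol

theorem stmt12_general {N : ℕ} (z c : Fin N → ℝ)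
    (hc : ∀ j, 0 < c j) (q0 : ℝ)
    (f : ℝ → ℝ)
    (hf : ∀ φ : ℝ, f φ = q0 + ∑ j, z j * c j * Real.exp (-(z j) * φ))
    (hq0 : 0 < q0) (hzpos : ∀ j, 0 < z j)
    (φ0 : ℝ)
    (φf uf : ℝ → ℝ → ℝ)
    (hsol : ∀ L : ℝ, 0 < L →
      IsPBSol f (-(L / 2)) (L / 2) (φf L) (uf L) ∧
      φf L (-(L / 2)) = φ0 ∧ φf L (L / 2) = φ0)
    (σ : ℝ → ℝ) (hσ : ∀ L : ℝ, σ L = |uf L (-(L / 2))|) :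
    Tendsto σ atTop atTop := by
  have hfq : ∀ y, q0 ≤ f y := fun y => by
    rw [hf y, le_add_iff_nonneg_right]
    exact Finset.sum_nonneg fun j _ => mul_nonneg (mul_pos (hzpos j) (hc j)).le (exp_pos _).le
  have hσL : ∀ L, 0 < L → q0 * L / 2 ≤ σ L := fun L hL => by
    obtain ⟨hPB, hleft, hright⟩ := hsol L hL
    have hslope := hPB.mul_sub_div_two_le (fun x _ => hfq (φf L x)) (by linarith)
      (hleft.trans hright.symm)
    rw [show L / 2 - -(L / 2) = L by ring] at hslope
    exact (hσ L).symm ▸ hslope.trans (le_abs_self _)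
  refine tendsto_atTop_mono' _ ?_ ((tendsto_id.const_mul_atTop hq0).atTop_div_const two_pos)
  filter_upwards [eventually_gt_atTop 0] with L hL
  exact hσL L hL

/-- No saturation of the surface charge density in the absence of
equilibrium.  If `q0 > 0` and all `z j > 0`, with `φ_L` the solution of the
equal-potential Dirichlet problem with value `φ0` on `[-L/2, L/2]` and
`σ(L) = |φ_L'(-L/2)|`, then `σ(L) → +∞` as `L → ∞`. -/
theorem stmt12 {N : ℕ} (hN : 1 ≤ N) (z c : Fin N → ℝ)
    (hz : ∀ j, z j ≠ 0) (hc : ∀ j, 0 < c j) (q0 : ℝ)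
    (f : ℝ → ℝ)
    (hf : ∀ φ : ℝ, f φ = q0 + ∑ j, z j * c j * Real.exp (-(z j) * φ))
    (hq0 : 0 < q0) (hzpos : ∀ j, 0 < z j)
    (φ0 : ℝ)
    (φf uf : ℝ → ℝ → ℝ)
    (hsol : ∀ L : ℝ, 0 < L →
      IsPBSol f (-(L / 2)) (L / 2) (φf L) (uf L) ∧
      φf L (-(L / 2)) = φ0 ∧ φf L (L / 2) = φ0)
    (σ : ℝ → ℝ) (hσ : ∀ L : ℝ, σ L = |uf L (-(L / 2))|) :
    Tendsto σ atTop atTop :=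
  stmt12_general z c hc q0 f hf hq0 hzpos φ0 φf uf hsol σ hσ
end

section
/- Assume z_min := min_{1 ≤ j ≤ N} z_j < 0 and fix φ_0 ∈ ℝ. For q_0 > 0 write f_{q_0}(φ) = q_0 + Σ_j z_j c_j^b exp(−z_j φ) and F_{q_0}(φ) = q_0 φ − Σ_j c_j^b exp(−z_j φ), let φ*(q_0) be the unique zero of f_{q_0}, and set σ(q_0)² = 2 (F_{q_0}(φ*(q_0)) − F_{q_0}(φ_0)). Then σ(q_0)² / (q_0 ln q_0) → −2/z_min as q_0 → +∞. -/
open Real Filter Set Topology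

set_option maxHeartbeats 1000000 in
/-- Asymptotics of the maximum surface charge density for large positive
fixed charge: if `z_min := min_j z j < 0`, `φ*(q0)` is the unique zero of
`f_{q0}`, and `σ(q0)² = 2 (F_{q0}(φ*(q0)) − F_{q0}(φ0))`, then
`σ(q0)² / (q0 ln q0) → −2/z_min` as `q0 → +∞`. -/
theorem stmt13 {N : ℕ} (hN : 1 ≤ N) (z c : Fin N → ℝ)
    (hz : ∀ j, z j ≠ 0) (hc : ∀ j, 0 < c j)
    (zmin : ℝ) (hzmin_mem : ∃ l, z l = zmin) (hzmin_le : ∀ j, zmin ≤ z j)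
    (hzmin_neg : zmin < 0)
    (φ0 : ℝ)
    (f F : ℝ → ℝ → ℝ)
    (hf : ∀ q0 φ : ℝ, f q0 φ = q0 + ∑ j, z j * c j * Real.exp (-(z j) * φ))
    (hF : ∀ q0 φ : ℝ, F q0 φ = q0 * φ - ∑ j, c j * Real.exp (-(z j) * φ))
    (φstar : ℝ → ℝ) (hstar : ∀ q0 : ℝ, 0 < q0 → f q0 (φstar q0) = 0)
    (σsq : ℝ → ℝ)
    (hσsq : ∀ q0 : ℝ, σsq q0 = 2 * (F q0 (φstar q0) - F q0 φ0)) :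
    Tendsto (fun q0 : ℝ => σsq q0 / (q0 * Real.log q0)) atTop
      (𝓝 (-2 / zmin)) := by
  obtain ⟨l, hl⟩ := hzmin_mem
  set A : ℝ := ∑ j, |z j| * c j with hA
  set D : ℝ := -zmin * c l with hD
  set Cs : ℝ := ∑ j, c j with hCs
  set K : ℝ := ∑ j, c j * Real.exp (-(z j) * φ0) with hK
  have hzne : zmin ≠ 0 := ne_of_lt hzmin_neg
  have hmzpos : (0:ℝ) < -zmin := by linarith
  have hDpos : 0 < D := by rw [hD]; exact mul_pos hmzpos (hc l)
  have hApos : 0 < A := by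
    rw [hA]
    exact Finset.sum_pos (fun j _ => mul_pos (abs_pos.mpr (hz j)) (hc j))
      ⟨l, Finset.mem_univ l⟩
  have hCspos : 0 < Cs := by
    rw [hCs]; exact Finset.sum_pos (fun j _ => hc j) ⟨l, Finset.mem_univ l⟩
  -- main quantitative bounds, valid for q0 large
  have main : ∀ q0 : ℝ, max (A + 1) 2 ≤ q0 →
      0 < q0 ∧
      (Real.log q0 - Real.log A) / (-zmin) ≤ φstar q0 ∧
      φstar q0 ≤ (Real.log q0 + (Real.log 2 - Real.log D)) / (-zmin) ∧
      (∑ j, c j * Real.exp (-(z j) * φstar q0)) ≤ Cs * (2 * q0 / D) := by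
    intro q0 hq0
    have hq2 : (2:ℝ) ≤ q0 := le_trans (le_max_right _ _) hq0
    have hqA : A + 1 ≤ q0 := le_trans (le_max_left _ _) hq0
    have hqpos : (0:ℝ) < q0 := by linarith
    set φ := φstar q0 with hφdef
    have hfz : q0 + ∑ j, z j * c j * Real.exp (-(z j) * φ) = 0 := by
      rw [← hf]; exact hstar q0 hqpos
    -- φ ≥ 0
    have hφ0 : 0 ≤ φ := by
      by_contra hcon
      push_neg at hcon
      have hterm : ∀ j : Fin N, -(|z j| * c j) ≤ z j * c j * Real.exp (-(z j) * φ) := by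
        intro j
        rcases (hz j).lt_or_gt with hj | hj
        · have he : Real.exp (-(z j) * φ) ≤ 1 := by
            rw [Real.exp_le_one_iff]
            nlinarith [mul_nonneg (neg_nonneg.mpr hj.le) (neg_nonneg.mpr hcon.le)]
          rw [abs_of_neg hj]
          nlinarith [Real.exp_pos (-(z j) * φ), mul_pos (neg_pos.mpr hj) (hc j)]
        · rw [abs_of_pos hj]
          nlinarith [mul_pos (mul_pos hj (hc j)) (Real.exp_pos (-(z j) * φ)),
            mul_pos hj (hc j)]
      have hsum : -A ≤ ∑ j, z j * c j * Real.exp (-(z j) * φ) := by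
        have := Finset.sum_le_sum (fun j (_ : j ∈ Finset.univ) => hterm j)
        rw [Finset.sum_neg_distrib, ← hA] at this
        exact this
      linarith
    have hexpE : ∀ j : Fin N, Real.exp (-(z j) * φ) ≤ Real.exp (-zmin * φ) := by
      intro j
      apply Real.exp_le_exp.mpr
      nlinarith [mul_nonneg (sub_nonneg.mpr (hzmin_le j)) hφ0]
    -- upper bound: q0 ≤ A * exp(-zmin φ)
    have hqAE : q0 ≤ A * Real.exp (-zmin * φ) := by
      have h1 : q0 = ∑ j, -(z j * c j * Real.exp (-(z j) * φ)) := by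
        rw [Finset.sum_neg_distrib]; linarith
      have h2 : ∀ j : Fin N, -(z j * c j * Real.exp (-(z j) * φ))
          ≤ |z j| * c j * Real.exp (-zmin * φ) := by
        intro j
        calc -(z j * c j * Real.exp (-(z j) * φ))
            ≤ |z j * c j * Real.exp (-(z j) * φ)| := neg_le_abs _
          _ = |z j| * c j * Real.exp (-(z j) * φ) := by
              rw [abs_mul, abs_mul, abs_of_pos (hc j), abs_of_pos (Real.exp_pos _)]
          _ ≤ |z j| * c j * Real.exp (-zmin * φ) := by
              have := hexpE j
              have hnn : 0 ≤ |z j| * c j := mul_nonneg (abs_nonneg _) (hc j).le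
              nlinarith
      calc q0 = ∑ j, -(z j * c j * Real.exp (-(z j) * φ)) := h1
        _ ≤ ∑ j, |z j| * c j * Real.exp (-zmin * φ) :=
            Finset.sum_le_sum (fun j _ => h2 j)
        _ = A * Real.exp (-zmin * φ) := by
            rw [hA, Finset.sum_mul]
    -- lower bound: D * exp(-zmin φ) - A ≤ q0
    have hterm2 : ∀ j : Fin N, z j * c j * Real.exp (-(z j) * φ) ≤ |z j| * c j := by
      intro j
      rcases (hz j).lt_or_gt with hj | hj
      · nlinarith [mul_pos (hc j) (Real.exp_pos (-(z j) * φ)),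
          mul_pos (abs_pos.mpr (hz j)) (hc j)]
      · have he : Real.exp (-(z j) * φ) ≤ 1 := by
          rw [Real.exp_le_one_iff]
          nlinarith [mul_nonneg hj.le hφ0]
        rw [abs_of_pos hj]
        nlinarith [mul_pos hj (hc j), Real.exp_pos (-(z j) * φ)]
    have hsplit : z l * c l * Real.exp (-(z l) * φ)
        + ∑ j ∈ Finset.univ.erase l, z j * c j * Real.exp (-(z j) * φ)
        = ∑ j, z j * c j * Real.exp (-(z j) * φ) :=
      Finset.add_sum_erase Finset.univ (fun j => z j * c j * Real.exp (-(z j) * φ)) (Finset.mem_univ l)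
    have hsum2 : ∑ j ∈ Finset.univ.erase l, z j * c j * Real.exp (-(z j) * φ) ≤ A := by
      calc ∑ j ∈ Finset.univ.erase l, z j * c j * Real.exp (-(z j) * φ)
          ≤ ∑ j ∈ Finset.univ.erase l, |z j| * c j :=
            Finset.sum_le_sum (fun j _ => hterm2 j)
        _ ≤ A := by
            rw [hA]
            exact Finset.sum_le_sum_of_subset_of_nonneg
              (Finset.subset_univ _)
              (fun j _ _ => mul_nonneg (abs_nonneg _) (hc j).le)
    have hterml : D * Real.exp (-zmin * φ) = -(z l * c l * Real.exp (-(z l) * φ)) := by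
      rw [hD, hl]; ring
    have hDEq : D * Real.exp (-zmin * φ) - A ≤ q0 := by linarith
    -- exponential bounds
    have hElb : q0 / A ≤ Real.exp (-zmin * φ) := by
      rw [div_le_iff₀ hApos]; linarith
    have hEub : Real.exp (-zmin * φ) ≤ 2 * q0 / D := by
      rw [le_div_iff₀ hDpos]; nlinarith
    -- log bounds
    have hloglb : Real.log q0 - Real.log A ≤ -zmin * φ := by
      have h1 : Real.log (q0 / A) ≤ Real.log (Real.exp (-zmin * φ)) := by
        gcongr
      rw [Real.log_exp, Real.log_div (ne_of_gt hqpos) (ne_of_gt hApos)] at h1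
      exact h1
    have hlogub : -zmin * φ ≤ Real.log q0 + (Real.log 2 - Real.log D) := by
      have h1 : Real.log (Real.exp (-zmin * φ)) ≤ Real.log (2 * q0 / D) := by
        gcongr
      rw [Real.log_exp, Real.log_div (by positivity) (ne_of_gt hDpos),
        Real.log_mul (by norm_num) (ne_of_gt hqpos)] at h1
      linarith
    refine ⟨hqpos, ?_, ?_, ?_⟩
    · rw [div_le_iff₀ hmzpos]; linarith
    · rw [le_div_iff₀ hmzpos]; linarith
    · calc ∑ j, c j * Real.exp (-(z j) * φ)
          ≤ ∑ j, c j * Real.exp (-zmin * φ) :=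
            Finset.sum_le_sum (fun j _ => mul_le_mul_of_nonneg_left (hexpE j) (hc j).le)
        _ = Cs * Real.exp (-zmin * φ) := by rw [hCs, Finset.sum_mul]
        _ ≤ Cs * (2 * q0 / D) := mul_le_mul_of_nonneg_left hEub hCspos.le
  -- the two comparison functions and their common limit
  have haux : ∀ a : ℝ, Tendsto
      (fun q0 : ℝ => -2 / zmin + (a + 2 * K / q0) / Real.log q0) atTop
      (𝓝 (-2 / zmin)) := by
    intro a
    have h1 : Tendsto (fun q0 : ℝ => a + 2 * K / q0) atTop (𝓝 (a + 0)) :=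
      tendsto_const_nhds.add (Tendsto.div_atTop tendsto_const_nhds tendsto_id)
    have h2 : Tendsto (fun q0 : ℝ => (a + 2 * K / q0) / Real.log q0) atTop (𝓝 0) :=
      Tendsto.div_atTop h1 Real.tendsto_log_atTop
    have h3 := (tendsto_const_nhds (x := -2 / zmin) (f := atTop (α := ℝ))).add h2
    simpa using h3
  refine tendsto_of_tendsto_of_tendsto_of_le_of_le'
    (haux (2 * Real.log A / zmin - 4 * Cs / D - 2 * φ0))
    (haux (-(2 * (Real.log 2 - Real.log D)) / zmin - 2 * φ0)) ?_ ?_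
  · filter_upwards [eventually_ge_atTop (max (A + 1) 2)] with q0 hq0
    obtain ⟨hqpos, hφlb, hφub, hS1⟩ := main q0 hq0
    have hq2 : (2:ℝ) ≤ q0 := le_trans (le_max_right _ _) hq0
    have hlogpos : 0 < Real.log q0 := Real.log_pos (by linarith)
    have hql : 0 < q0 * Real.log q0 := mul_pos hqpos hlogpos
    have hσ : σsq q0 = 2 * (q0 * φstar q0
        - (∑ j, c j * Real.exp (-(z j) * φstar q0)) - q0 * φ0 + K) := by
      rw [hσsq, hF, hF, hK]; ring
    have hnum : 2 * (q0 * ((Real.log q0 - Real.log A) / (-zmin))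
        - Cs * (2 * q0 / D) - q0 * φ0 + K) ≤ σsq q0 := by
      rw [hσ]
      have h1 : q0 * ((Real.log q0 - Real.log A) / (-zmin)) ≤ q0 * φstar q0 :=
        mul_le_mul_of_nonneg_left hφlb hqpos.le
      linarith
    have heq : -2 / zmin + (2 * Real.log A / zmin - 4 * Cs / D - 2 * φ0 + 2 * K / q0)
          / Real.log q0
        = 2 * (q0 * ((Real.log q0 - Real.log A) / (-zmin))
          - Cs * (2 * q0 / D) - q0 * φ0 + K) / (q0 * Real.log q0) := by
      field_simp
      ring
    rw [heq]
    exact div_le_div_of_nonneg_right hnum hql.le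
  · filter_upwards [eventually_ge_atTop (max (A + 1) 2)] with q0 hq0
    obtain ⟨hqpos, hφlb, hφub, hS1⟩ := main q0 hq0
    have hq2 : (2:ℝ) ≤ q0 := le_trans (le_max_right _ _) hq0
    have hlogpos : 0 < Real.log q0 := Real.log_pos (by linarith)
    have hql : 0 < q0 * Real.log q0 := mul_pos hqpos hlogpos
    have hσ : σsq q0 = 2 * (q0 * φstar q0
        - (∑ j, c j * Real.exp (-(z j) * φstar q0)) - q0 * φ0 + K) := by
      rw [hσsq, hF, hF, hK]; ring
    have hnum : σsq q0 ≤ 2 * (q0 * ((Real.log q0 + (Real.log 2 - Real.log D)) / (-zmin))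
        - q0 * φ0 + K) := by
      rw [hσ]
      have h1 : q0 * φstar q0
          ≤ q0 * ((Real.log q0 + (Real.log 2 - Real.log D)) / (-zmin)) :=
        mul_le_mul_of_nonneg_left hφub hqpos.le
      have h2 : 0 ≤ ∑ j, c j * Real.exp (-(z j) * φstar q0) :=
        Finset.sum_nonneg (fun j _ => (mul_pos (hc j) (Real.exp_pos _)).le)
      linarith
    have heq : -2 / zmin + (-(2 * (Real.log 2 - Real.log D)) / zmin - 2 * φ0 + 2 * K / q0)
          / Real.log q0
        = 2 * (q0 * ((Real.log q0 + (Real.log 2 - Real.log D)) / (-zmin))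
          - q0 * φ0 + K) / (q0 * Real.log q0) := by
      field_simp
      ring
    rw [heq]
    exact div_le_div_of_nonneg_right hnum hql.le
end

section
/- Assume z_max := max_{1 ≤ j ≤ N} z_j > 0 and fix φ_0 ∈ ℝ. For q_0 < 0 write f_{q_0}(φ) = q_0 + Σ_j z_j c_j^b exp(−z_j φ) and F_{q_0}(φ) = q_0 φ − Σ_j c_j^b exp(−z_j φ), let φ*(q_0) be the unique zero of f_{q_0}, and set σ(q_0)² = 2 (F_{q_0}(φ*(q_0)) − F_{q_0}(φ_0)). Then σ(q_0)² / (q_0 ln |q_0|) → −2/z_max as q_0 → −∞. -/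
/-!
Write `p = -q0` and `u = exp (-zmax φ*)`. As `φ*` solves `∑ z_j c_j exp (-z_j φ*) = p`, for large `p`
it is nonpositive, so every exponential is dominated by `u`; comparing the sum with `A u`, where
`A = ∑ |z_j| c_j`, and with its `z_l = zmax` term gives `p / A ≤ u ≤ 2 p / (zmax c_l)`. Hence
`φ* = -log p / zmax + O(1)` and `∑ c_j exp (-z_j φ*) = O(p)`, so that
`σ(q0)² = (2 / zmax) p log p + O(p)`.
-/

open Real Filter Topology Asymptotics

section Pointwise

variable {z zmax φ : ℝ}

lemma neg_abs_le_mul_exp_neg_mul (hφ : φ ≤ 0) : -|z| ≤ z * exp (-z * φ) := by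
  rcases le_or_gt 0 z with hz | hz
  · exact (neg_nonpos.2 (abs_nonneg z)).trans (mul_nonneg hz (exp_pos _).le)
  · have hexp : exp (-z * φ) ≤ 1 := exp_le_one_iff.2 (by nlinarith)
    rw [abs_of_neg hz]
    nlinarith

lemma exp_neg_mul_le_exp_neg_mul (hφ : φ ≤ 0) (hz : z ≤ zmax) :
    exp (-z * φ) ≤ exp (-zmax * φ) :=
  exp_le_exp.2 (by nlinarith)

lemma mul_exp_neg_mul_le_abs_mul_exp (hφ : φ ≤ 0) (hz : z ≤ zmax) :
    z * exp (-z * φ) ≤ |z| * exp (-zmax * φ) :=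
  (mul_le_mul_of_nonneg_right (le_abs_self z) (exp_pos _).le).trans
    (mul_le_mul_of_nonneg_left (exp_neg_mul_le_exp_neg_mul hφ hz) (abs_nonneg z))

end Pointwise

section Sums

variable {ι : Type*} [Fintype ι] {z c : ι → ℝ} {zmax φ : ℝ}

lemma nonpos_of_sum_abs_mul_lt (hc : ∀ j, 0 ≤ c j)
    (h : ∑ j, |z j| * c j < ∑ j, z j * c j * exp (-z j * φ)) : φ ≤ 0 := by
  by_contra! hφ
  refine h.not_ge (Finset.sum_le_sum fun j _ => ?_)
  have hterm := neg_abs_le_mul_exp_neg_mul (z := -z j) (φ := -φ) (by linarith)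
  rw [abs_neg, show -(-z j) * -φ = -z j * φ by ring] at hterm
  nlinarith [hc j]

lemma sum_mul_exp_le (hc : ∀ j, 0 ≤ c j) (hz : ∀ j, z j ≤ zmax) (hφ : φ ≤ 0) :
    ∑ j, z j * c j * exp (-z j * φ) ≤ (∑ j, |z j| * c j) * exp (-zmax * φ) := by
  rw [Finset.sum_mul]
  exact Finset.sum_le_sum fun j _ => by
    nlinarith [mul_exp_neg_mul_le_abs_mul_exp hφ (hz j), hc j]

lemma mul_exp_sub_sum_abs_le (hc : ∀ j, 0 ≤ c j) (hφ : φ ≤ 0) (l : ι) :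
    z l * c l * exp (-z l * φ) - ∑ j, |z j| * c j ≤ ∑ j, z j * c j * exp (-z j * φ) := by
  have hterm : ∀ j, 0 ≤ z j * c j * exp (-z j * φ) + |z j| * c j := fun j => by
    nlinarith [neg_abs_le_mul_exp_neg_mul (z := z j) hφ, hc j]
  have hl := Finset.single_le_sum (fun j _ => hterm j) (Finset.mem_univ l)
  rw [Finset.sum_add_distrib] at hl
  linarith [mul_nonneg (abs_nonneg (z l)) (hc l)]

lemma sum_exp_le (hc : ∀ j, 0 ≤ c j) (hz : ∀ j, z j ≤ zmax) (hφ : φ ≤ 0) :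
    ∑ j, c j * exp (-z j * φ) ≤ (∑ j, c j) * exp (-zmax * φ) := by
  rw [Finset.sum_mul]
  exact Finset.sum_le_sum fun j _ =>
    mul_le_mul_of_nonneg_left (exp_neg_mul_le_exp_neg_mul hφ (hz j)) (hc j)

lemma mul_le_sum_abs_mul (hc : ∀ j, 0 ≤ c j) {i₀ : ι} (hi₀ : z i₀ = zmax) (hzmax : 0 ≤ zmax) :
    zmax * c i₀ ≤ ∑ j, |z j| * c j := by
  simpa [hi₀, abs_of_nonneg hzmax] using
    Finset.single_le_sum (fun j _ => mul_nonneg (abs_nonneg (z j)) (hc j)) (Finset.mem_univ i₀)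

end Sums

section Asymptotics

variable {α : Type*} {l : Filter α}

lemma tendsto_div_of_isBigO_sub {w v g : α → ℝ} {k : ℝ} (hv : ∀ᶠ x in l, v x ≠ 0)
    (hg : g =o[l] v) (h : (fun x => w x - k * v x) =O[l] g) :
    Tendsto (fun x => w x / v x) l (𝓝 k) := by
  have hlim := ((h.trans_isLittleO hg).tendsto_div_nhds_zero).add_const k
  rw [zero_add] at hlim
  refine hlim.congr' ?_
  filter_upwards [hv] with x hx
  field_simp
  ring

lemma isBigO_log_sub_log {u v : α → ℝ} {a b : ℝ} (ha : 0 < a)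
    (h : ∀ᶠ x in l, 0 < v x ∧ a * v x ≤ u x ∧ u x ≤ b * v x) :
    (fun x => log (u x) - log (v x)) =O[l] (fun _ => (1 : ℝ)) := by
  refine .of_bound (max |log a| |log b|) ?_
  filter_upwards [h] with x ⟨hv, hlo, hhi⟩
  have hu : 0 < u x := lt_of_lt_of_le (mul_pos ha hv) hlo
  have hlog_lo : log a ≤ log (u x) - log (v x) := by
    rw [← log_div hu.ne' hv.ne']
    exact log_le_log ha ((le_div_iff₀ hv).2 hlo)
  have hlog_hi : log (u x) - log (v x) ≤ log b := by
    rw [← log_div hu.ne' hv.ne']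
    exact log_le_log (div_pos hu hv) ((div_le_iff₀ hv).2 hhi)
  rw [norm_one, mul_one, norm_eq_abs, abs_le]
  constructor <;> linarith [neg_abs_le (log a), le_abs_self (log b),
    le_max_left |log a| |log b|, le_max_right |log a| |log b|]

end Asymptotics

section Root

variable {ι : Type*} [Fintype ι] {z c : ι → ℝ} {zmax : ℝ} {i₀ : ι} {φs : ℝ → ℝ}

lemma eventually_exp_root_bounds (hc : ∀ j, 0 ≤ c j) (hz : ∀ j, z j ≤ zmax)
    (hi₀ : z i₀ = zmax) (hzmax : 0 < zmax) (hci₀ : 0 < c i₀)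
    (hroot : ∀ q < 0, ∑ j, z j * c j * exp (-z j * φs q) = -q) :
    ∀ᶠ q in atBot, φs q ≤ 0 ∧ (∑ j, |z j| * c j)⁻¹ * |q| ≤ exp (-zmax * φs q) ∧
      exp (-zmax * φs q) ≤ 2 / (zmax * c i₀) * |q| := by
  set A := ∑ j, |z j| * c j
  have hB : 0 < zmax * c i₀ := mul_pos hzmax hci₀
  have hBA : zmax * c i₀ ≤ A := mul_le_sum_abs_mul hc hi₀ hzmax.le
  filter_upwards [eventually_lt_atBot (-A)] with q hq
  have hq0 : q < 0 := by linarith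
  have hsum := hroot q hq0
  have hφ : φs q ≤ 0 := nonpos_of_sum_abs_mul_lt hc (by rw [hsum]; linarith)
  have hupper := sum_mul_exp_le hc hz hφ
  have hlower := mul_exp_sub_sum_abs_le (z := z) hc hφ i₀
  rw [hsum, hi₀] at hlower
  rw [hsum] at hupper
  rw [abs_of_neg hq0]
  refine ⟨hφ, ?_, ?_⟩
  · rw [inv_mul_le_iff₀ (hB.trans_le hBA)]
    exact hupper
  · rw [div_mul_eq_mul_div, le_div_iff₀ hB]
    linarith

lemma isBigO_root_add_log (hc : ∀ j, 0 ≤ c j) (hz : ∀ j, z j ≤ zmax)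
    (hi₀ : z i₀ = zmax) (hzmax : 0 < zmax) (hci₀ : 0 < c i₀)
    (hroot : ∀ q < 0, ∑ j, z j * c j * exp (-z j * φs q) = -q) :
    (fun q => φs q + log |q| / zmax) =O[atBot] (fun _ => (1 : ℝ)) := by
  have hA : 0 < ∑ j, |z j| * c j :=
    (mul_pos hzmax hci₀).trans_le (mul_le_sum_abs_mul hc hi₀ hzmax.le)
  have hlog := isBigO_log_sub_log (u := fun q => exp (-zmax * φs q)) (v := fun q => |q|)
    (inv_pos.2 hA) <| by
      filter_upwards [eventually_exp_root_bounds hc hz hi₀ hzmax hci₀ hroot,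
        eventually_lt_atBot 0] with q ⟨_, hlo, hhi⟩ hq
      exact ⟨abs_pos.2 hq.ne, hlo, hhi⟩
  refine (hlog.const_mul_left (-zmax⁻¹)).congr_left fun q => ?_
  rw [log_exp]
  field_simp
  ring

lemma isBigO_sum_exp_root (hc : ∀ j, 0 ≤ c j) (hz : ∀ j, z j ≤ zmax)
    (hi₀ : z i₀ = zmax) (hzmax : 0 < zmax) (hci₀ : 0 < c i₀)
    (hroot : ∀ q < 0, ∑ j, z j * c j * exp (-z j * φs q) = -q) :
    (fun q => ∑ j, c j * exp (-z j * φs q)) =O[atBot] (fun q => q) := by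
  refine .of_bound ((∑ j, c j) * (2 / (zmax * c i₀))) ?_
  filter_upwards [eventually_exp_root_bounds hc hz hi₀ hzmax hci₀ hroot] with q ⟨hφ, _, hhi⟩
  have hS : 0 ≤ ∑ j, c j * exp (-z j * φs q) :=
    Finset.sum_nonneg fun j _ => mul_nonneg (hc j) (exp_pos _).le
  rw [norm_of_nonneg hS, norm_eq_abs, mul_assoc]
  exact (sum_exp_le hc hz hφ).trans
    (mul_le_mul_of_nonneg_left hhi (Finset.sum_nonneg fun j _ => hc j))

end Root

theorem stmt14_general {N : ℕ} (z c : Fin N → ℝ)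
    (hc : ∀ j, 0 < c j)
    (zmax : ℝ) (hzmax_mem : ∃ l, z l = zmax) (hzmax_ge : ∀ j, z j ≤ zmax)
    (hzmax_pos : 0 < zmax)
    (φ0 : ℝ)
    (f F : ℝ → ℝ → ℝ)
    (hf : ∀ q0 φ : ℝ, f q0 φ = q0 + ∑ j, z j * c j * Real.exp (-(z j) * φ))
    (hF : ∀ q0 φ : ℝ, F q0 φ = q0 * φ - ∑ j, c j * Real.exp (-(z j) * φ))
    (φstar : ℝ → ℝ) (hstar : ∀ q0 : ℝ, q0 < 0 → f q0 (φstar q0) = 0)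
    (σsq : ℝ → ℝ)
    (hσsq : ∀ q0 : ℝ, σsq q0 = 2 * (F q0 (φstar q0) - F q0 φ0)) :
    Tendsto (fun q0 : ℝ => σsq q0 / (q0 * Real.log |q0|)) atBot
      (𝓝 (-2 / zmax)) := by
  obtain ⟨i₀, hi₀⟩ := hzmax_mem
  have hroot : ∀ q0 < 0, ∑ j, z j * c j * exp (-z j * φstar q0) = -q0 := fun q0 hq0 => by
    linarith [hf q0 (φstar q0), hstar q0 hq0]
  have hc' : ∀ j, 0 ≤ c j := fun j => (hc j).le
  have hφstar := isBigO_root_add_log hc' hzmax_ge hi₀ hzmax_pos (hc i₀) hroot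
  have hSstar := isBigO_sum_exp_root hc' hzmax_ge hi₀ hzmax_pos (hc i₀) hroot
  have hlog : Tendsto (fun q0 : ℝ => log |q0|) atBot atTop :=
    tendsto_log_atTop.comp tendsto_abs_atBot_atTop
  refine tendsto_div_of_isBigO_sub (g := fun q0 => q0) ?_ ?_ ?_
  · filter_upwards [hlog.eventually_gt_atTop 0, eventually_lt_atBot 0] with q0 hL hq0
    exact mul_ne_zero hq0.ne hL.ne'
  · simpa using (isBigO_refl (fun q0 : ℝ => q0) atBot).mul_isLittleO
      ((isLittleO_one_left_iff ℝ).2 (tendsto_norm_atTop_atTop.comp hlog))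
  · have hlin : (fun q0 : ℝ => q0 * (φstar q0 + log |q0| / zmax)) =O[atBot] fun q0 => q0 := by
      simpa using (isBigO_refl (fun q0 : ℝ => q0) atBot).mul hφstar
    have hS0 := isLittleO_const_id_atBot (∑ j, c j * exp (-z j * φ0))
    refine ((((hlin.const_mul_left 2).sub (hSstar.const_mul_left 2)).sub
      ((isBigO_refl _ _).const_mul_left (2 * φ0))).add
      (hS0.isBigO.const_mul_left 2)).congr_left fun q0 => ?_
    simp only [hσsq, hF]
    field_simp
    ring

/-- Asymptotics of the maximum surface charge density for large negative
fixed charge: if `z_max := max_j z j > 0`, `φ*(q0)` is the unique zero of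
`f_{q0}`, and `σ(q0)² = 2 (F_{q0}(φ*(q0)) − F_{q0}(φ0))`, then
`σ(q0)² / (q0 ln |q0|) → −2/z_max` as `q0 → −∞`. -/
theorem stmt14 {N : ℕ} (hN : 1 ≤ N) (z c : Fin N → ℝ)
    (hz : ∀ j, z j ≠ 0) (hc : ∀ j, 0 < c j)
    (zmax : ℝ) (hzmax_mem : ∃ l, z l = zmax) (hzmax_ge : ∀ j, z j ≤ zmax)
    (hzmax_pos : 0 < zmax)
    (φ0 : ℝ)
    (f F : ℝ → ℝ → ℝ)
    (hf : ∀ q0 φ : ℝ, f q0 φ = q0 + ∑ j, z j * c j * Real.exp (-(z j) * φ))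
    (hF : ∀ q0 φ : ℝ, F q0 φ = q0 * φ - ∑ j, c j * Real.exp (-(z j) * φ))
    (φstar : ℝ → ℝ) (hstar : ∀ q0 : ℝ, q0 < 0 → f q0 (φstar q0) = 0)
    (σsq : ℝ → ℝ)
    (hσsq : ∀ q0 : ℝ, σsq q0 = 2 * (F q0 (φstar q0) - F q0 φ0)) :
    Tendsto (fun q0 : ℝ => σsq q0 / (q0 * Real.log |q0|)) atBot
      (𝓝 (-2 / zmax)) :=
  stmt14_general z c hc zmax hzmax_mem hzmax_ge hzmax_pos φ0 f F hf hF φstar hstar σsq hσsq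
end

section
/- Assume z_j < 0 for all j and q_0 < 0 (no equilibrium). Fix σ > 0 and set L_c = −2σ/q_0 > 0. For each L ∈ (0, L_c), let φ_L be the unique twice continuously differentiable solution of φ″ + f(φ) = 0 on [−L/2, L/2] with φ_L′(−L/2) = −σ and φ_L′(L/2) = σ; since f < 0 along the solution, φ_L′ is strictly increasing, so there is a unique δ_N(L) ∈ (0, L) with φ_L′(−L/2 + δ_N(L)) = −σ/2. Then δ_N(L) → L_c/4 as L → L_c⁻. -/
open Real Filter Set Topology

/-- Gradient-type inequality for a function with a derivative bounded below on `Icc a b`. -/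
lemma grow_lemma {a b : ℝ} {g g' : ℝ → ℝ}
    (h : ∀ x ∈ Set.Icc a b, HasDerivWithinAt g (g' x) (Set.Icc a b) x)
    {C : ℝ} (hC : ∀ x ∈ Set.Icc a b, C ≤ g' x) :
    ∀ x ∈ Set.Icc a b, ∀ y ∈ Set.Icc a b, x ≤ y → C * (y - x) ≤ g y - g x := by
  apply (convex_Icc a b).mul_sub_le_image_sub_of_le_deriv
  · exact fun x hx => (h x hx).continuousWithinAt
  · intro x hx
    rw [interior_Icc] at hx
    exact (((h x (Set.Ioo_subset_Icc_self hx)).hasDerivAt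
      (Icc_mem_nhds hx.1 hx.2)).differentiableAt).differentiableWithinAt
  · intro x hx
    rw [interior_Icc] at hx
    rw [((h x (Set.Ioo_subset_Icc_self hx)).hasDerivAt (Icc_mem_nhds hx.1 hx.2)).deriv]
    exact hC x (Set.Ioo_subset_Icc_self hx)

/-- In the no-equilibrium case (all `z j < 0`, `q0 < 0`), with `σ > 0`,
`L_c = -2σ/q0 > 0`, and for `L ∈ (0, L_c)` the boundary-layer width `δ_N(L)` determined
by `φ_L'(-L/2 + δ_N(L)) = -σ/2`, one has `δ_N(L) → L_c/4` as `L → L_c⁻`. -/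
theorem stmt15 {N : ℕ} (hN : 1 ≤ N) (z c : Fin N → ℝ)
    (hz : ∀ j, z j ≠ 0) (hc : ∀ j, 0 < c j) (q0 : ℝ)
    (f : ℝ → ℝ)
    (hf : ∀ φ : ℝ, f φ = q0 + ∑ j, z j * c j * Real.exp (-(z j) * φ))
    (hzneg : ∀ j, z j < 0) (hq0 : q0 < 0)
    (σ : ℝ) (hσ : 0 < σ)
    (Lc : ℝ) (hLc : Lc = -(2 * σ) / q0)
    (φf uf : ℝ → ℝ → ℝ)
    (hsol : ∀ L ∈ Set.Ioo 0 Lc,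
      IsPBSol f (-(L / 2)) (L / 2) (φf L) (uf L) ∧
      uf L (-(L / 2)) = -σ ∧ uf L (L / 2) = σ)
    (δ : ℝ → ℝ)
    (hδ : ∀ L ∈ Set.Ioo 0 Lc,
      δ L ∈ Set.Ioo 0 L ∧ uf L (-(L / 2) + δ L) = -σ / 2) :
    0 < Lc ∧ Tendsto δ (𝓝[<] Lc) (𝓝 (Lc / 4)) := by
  rw [eq_div_iff hq0.ne] at hLc
  have hLcpos : 0 < Lc := by nlinarith
  refine ⟨hLcpos, ?_⟩
  -- f is bounded above by q0
  have hfle : ∀ φ : ℝ, f φ ≤ q0 := by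
    intro φ
    rw [hf φ]
    have : (∑ j, z j * c j * Real.exp (-(z j) * φ)) ≤ 0 :=
      Finset.sum_nonpos fun j _ =>
        (mul_neg_of_neg_of_pos (mul_neg_of_neg_of_pos (hzneg j) (hc j))
          (Real.exp_pos _)).le
    linarith
  -- the two key bounds on δ L for L ∈ (0, Lc)
  have main : ∀ L ∈ Set.Ioo 0 Lc, L - 3 * Lc / 4 ≤ δ L ∧ δ L ≤ Lc / 4 := by
    intro L hL
    obtain ⟨hsolL, hua, hub⟩ := hsol L hL
    obtain ⟨hδmem, hδval⟩ := hδ L hL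
    set a := -(L / 2) with ha
    set b := L / 2 with hb
    have hderiv : ∀ x ∈ Set.Icc a b,
        HasDerivWithinAt (uf L) (-(f (φf L x))) (Set.Icc a b) x :=
      fun x hx => (hsolL x hx).2
    have hbound : ∀ x ∈ Set.Icc a b, -q0 ≤ -(f (φf L x)) :=
      fun x _ => neg_le_neg (hfle _)
    have grow := grow_lemma hderiv hbound
    have haIcc : a ∈ Set.Icc a b := Set.left_mem_Icc.2 (by simp [ha, hb]; linarith [hL.1])
    have hbIcc : b ∈ Set.Icc a b := Set.right_mem_Icc.2 (by simp [ha, hb]; linarith [hL.1])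
    have hpIcc : a + δ L ∈ Set.Icc a b := by
      constructor
      · linarith [hδmem.1]
      · simp only [ha, hb]; linarith [hδmem.2]
    have g1 := grow a haIcc (a + δ L) hpIcc (by linarith [hδmem.1])
    have g2 := grow (a + δ L) hpIcc b hbIcc (by simp only [ha, hb]; linarith [hδmem.2])
    rw [hδval, hua] at g1
    rw [hδval, hub] at g2
    have e1 : -q0 * (a + δ L - a) = -q0 * δ L := by ring
    have e2 : b - (a + δ L) = L - δ L := by simp [ha, hb]; ring
    rw [e2] at g2
    constructor
    · -- from g2 : -q0 * (L - δ L) ≤ σ - (-σ/2) = 3σ/2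
      nlinarith [g2, hδmem.1]
    · -- from g1 : -q0 * δ L ≤ -σ/2 - (-σ) = σ/2
      nlinarith [g1, hδmem.1]
  -- squeeze
  have hlow : Tendsto (fun L => L - 3 * Lc / 4) (𝓝[<] Lc) (𝓝 (Lc / 4)) := by
    have : Tendsto (fun L : ℝ => L - 3 * Lc / 4) (𝓝 Lc) (𝓝 (Lc - 3 * Lc / 4)) :=
      tendsto_id.sub_const _
    rw [show Lc - 3 * Lc / 4 = Lc / 4 by ring] at this
    exact this.mono_left nhdsWithin_le_nhds
  have hmem : Set.Ioo 0 Lc ∈ 𝓝[<] Lc :=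
    Ioo_mem_nhdsLT_of_mem ⟨hLcpos, le_refl Lc⟩
  refine tendsto_of_tendsto_of_tendsto_of_le_of_le' hlow tendsto_const_nhds ?_ ?_
  · filter_upwards [hmem] with L hL using (main L hL).1
  · filter_upwards [hmem] with L hL using (main L hL).2
end
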